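/- arXiv:1407.3021 — 11 statements merged into one kernel-verified Lean document; each statement's English description precedes it below -/
import Mathlib

section
/- For the parametrized X-matrix M, the characteristic polynomial is λ⁴ − a₁λ³ + a₂λ² − a₃λ + a₄ with a₁ = 1, a₂ = BC + G + H − x − y, a₃ = BH + CG − xB − yC, and a₄ = HG − yH − xG + xy = (H − x)(G − y). -/
open Real Complex Matrix Polynomial
open scoped ComplexOrder

noncomputable def Xmat (θ φ ψ x y μ ν : ℝ) : Matrix (Fin 4) (Fin 4) ℂ :=
  !![((Real.cos θ : ℂ))^2, 0, 0, (Real.sqrt x : ℂ) * Complex.exp (Complex.I * (μ : ℂ));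
     0, ((Real.sin θ : ℂ))^2 * ((Real.cos φ : ℂ))^2,
        (Real.sqrt y : ℂ) * Complex.exp (Complex.I * (ν : ℂ)), 0;
     0, (Real.sqrt y : ℂ) * Complex.exp (-Complex.I * (ν : ℂ)),
        ((Real.sin θ : ℂ))^2 * ((Real.sin φ : ℂ))^2 * ((Real.cos ψ : ℂ))^2, 0;
     (Real.sqrt x : ℂ) * Complex.exp (-Complex.I * (μ : ℂ)), 0, 0,
        ((Real.sin θ : ℂ))^2 * ((Real.sin φ : ℂ))^2 * ((Real.sin ψ : ℂ))^2]

lemma xdet (a b c d p q r s : ℂ) :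
    (Matrix.charpoly !![a,0,0,p; 0,b,q,0; 0,r,c,0; s,0,0,d]) =
      (X^2 - Polynomial.C (a+d) * X + Polynomial.C (a*d - p*s)) *
      (X^2 - Polynomial.C (b+c) * X + Polynomial.C (b*c - q*r)) := by
  rw [Matrix.charpoly]
  simp [Matrix.det_succ_row_zero, Fin.sum_univ_succ, Matrix.charmatrix_apply,
    Matrix.diagonal_apply, Fin.succ, Fin.castSucc, Fin.succAbove,
    Fin.castAdd, Fin.castLE]
  ring

theorem stmt1 (θ φ ψ x y μ ν : ℝ) (hx : 0 ≤ x) (hy : 0 ≤ y)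
    (B C₀ G H : ℝ)
    (hB : B = (Real.sin θ)^2 * (1 - (Real.sin φ)^2 * (Real.sin ψ)^2))
    (hC : C₀ = 1 - B)
    (hG : G = (Real.sin θ)^4 * (Real.sin φ)^2 * (Real.cos φ)^2 * (Real.cos ψ)^2)
    (hH : H = (Real.sin θ)^2 * (Real.cos θ)^2 * (Real.sin φ)^2 * (Real.sin ψ)^2)
    (a₁ a₂ a₃ a₄ : ℝ)
    (ha₁ : a₁ = 1)
    (ha₂ : a₂ = B * C₀ + G + H - x - y)
    (ha₃ : a₃ = B * H + C₀ * G - x * B - y * C₀)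
    (ha₄ : a₄ = H * G - y * H - x * G + x * y) :
    (Xmat θ φ ψ x y μ ν).charpoly =
        X^4 - Polynomial.C (a₁ : ℂ) * X^3 + Polynomial.C (a₂ : ℂ) * X^2
          - Polynomial.C (a₃ : ℂ) * X + Polynomial.C (a₄ : ℂ)
      ∧ a₄ = (H - x) * (G - y) := by
  refine ⟨?_, by rw [ha₄]; ring⟩
  have hexμ : Complex.exp (Complex.I * μ) * Complex.exp (-Complex.I * μ) = 1 := by
    rw [← Complex.exp_add]; ring_nf; exact Complex.exp_zero
  have hexν : Complex.exp (Complex.I * ν) * Complex.exp (-Complex.I * ν) = 1 := by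
    rw [← Complex.exp_add]; ring_nf; exact Complex.exp_zero
  have hxx : (Real.sqrt x : ℂ) * (Real.sqrt x : ℂ) = (x : ℂ) := by
    norm_cast; exact Real.mul_self_sqrt hx
  have hyy : (Real.sqrt y : ℂ) * (Real.sqrt y : ℂ) = (y : ℂ) := by
    norm_cast; exact Real.mul_self_sqrt hy
  rw [Xmat, xdet]
  have e1 : ((Real.cos θ : ℂ))^2 + ((Real.sin θ : ℂ))^2 * ((Real.sin φ : ℂ))^2 * ((Real.sin ψ : ℂ))^2
      = ((C₀ : ℝ) : ℂ) := by
    rw [hC, hB]; push_cast; norm_cast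
    rw [Real.cos_sq']; ring
  have e2 : ((Real.sin θ : ℂ))^2 * ((Real.cos φ : ℂ))^2 +
      ((Real.sin θ : ℂ))^2 * ((Real.sin φ : ℂ))^2 * ((Real.cos ψ : ℂ))^2 = ((B : ℝ) : ℂ) := by
    rw [hB]; push_cast; norm_cast
    rw [Real.cos_sq' φ, Real.cos_sq' ψ]; ring
  have e3 : ((Real.cos θ : ℂ))^2 * (((Real.sin θ : ℂ))^2 * ((Real.sin φ : ℂ))^2 * ((Real.sin ψ : ℂ))^2)
      - (Real.sqrt x : ℂ) * Complex.exp (Complex.I * μ) *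
        ((Real.sqrt x : ℂ) * Complex.exp (-Complex.I * μ)) = ((H - x : ℝ) : ℂ) := by
    have : (Real.sqrt x : ℂ) * Complex.exp (Complex.I * μ) *
        ((Real.sqrt x : ℂ) * Complex.exp (-Complex.I * μ)) = (x : ℂ) := by
      calc _ = ((Real.sqrt x : ℂ) * (Real.sqrt x : ℂ)) *
          (Complex.exp (Complex.I * μ) * Complex.exp (-Complex.I * μ)) := by ring
        _ = (x : ℂ) := by rw [hxx, hexμ, mul_one]
    rw [this, hH]; push_cast; ring
  have e4 : ((Real.sin θ : ℂ))^2 * ((Real.cos φ : ℂ))^2 *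
        (((Real.sin θ : ℂ))^2 * ((Real.sin φ : ℂ))^2 * ((Real.cos ψ : ℂ))^2)
      - (Real.sqrt y : ℂ) * Complex.exp (Complex.I * ν) *
        ((Real.sqrt y : ℂ) * Complex.exp (-Complex.I * ν)) = ((G - y : ℝ) : ℂ) := by
    have : (Real.sqrt y : ℂ) * Complex.exp (Complex.I * ν) *
        ((Real.sqrt y : ℂ) * Complex.exp (-Complex.I * ν)) = (y : ℂ) := by
      calc _ = ((Real.sqrt y : ℂ) * (Real.sqrt y : ℂ)) *
          (Complex.exp (Complex.I * ν) * Complex.exp (-Complex.I * ν)) := by ring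
        _ = (y : ℂ) := by rw [hyy, hexν, mul_one]
    rw [this, hG]; push_cast; ring
  rw [e1, e2, e3, e4, ha₁, ha₂, ha₃, ha₄]
  push_cast
  simp only [Polynomial.C_add, Polynomial.C_sub, Polynomial.C_mul, Polynomial.C_1]
  have hbc : (Polynomial.C ((C₀:ℝ):ℂ) + Polynomial.C ((B:ℝ):ℂ) : Polynomial ℂ) = 1 := by
    rw [← Polynomial.C_add, ← Polynomial.C_1]
    congr 1
    rw [hC]; push_cast; ring
  linear_combination (-(Polynomial.X:Polynomial ℂ)^3) * hbc
end

section
/- Given B, C, G, H ≥ 0 with C = 1 − B and x, y ≥ 0, the three inequalities BC + (H − x) + (G − y) ≥ 0, B(H − x) + C(G − y) ≥ 0, and (H − x)(G − y) ≥ 0 hold simultaneously if and only if x ≤ H and y ≤ G. -/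
theorem stmt2 (B C G H x y : ℝ)
    (hB : 0 ≤ B) (hC : 0 ≤ C) (hG : 0 ≤ G) (hH : 0 ≤ H)
    (hCB : C = 1 - B) (hx : 0 ≤ x) (hy : 0 ≤ y)
    (hBG : B = 0 → G = 0) (hCH : C = 0 → H = 0) :
    (B * C + (H - x) + (G - y) ≥ 0 ∧
     B * (H - x) + C * (G - y) ≥ 0 ∧
     (H - x) * (G - y) ≥ 0) ↔ (x ≤ H ∧ y ≤ G) := by
  constructor
  · rintro ⟨h1, h2, h3⟩
    by_contra hcon
    rw [not_and_or] at hcon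
    rcases hcon with hu | hv
    · push_neg at hu
      have hu' : H - x < 0 := by linarith
      have hv' : G - y ≤ 0 := by
        nlinarith [mul_pos (neg_pos.mpr hu') (neg_pos.mpr hu')]
      have hBu : B * (H - x) ≤ 0 := mul_nonpos_of_nonneg_of_nonpos hB hu'.le
      have hCv : C * (G - y) ≤ 0 := mul_nonpos_of_nonneg_of_nonpos hC hv'
      have hB0 : B = 0 := by
        rcases eq_or_lt_of_le hB with h | h
        · exact h.symm
        · nlinarith
      have hG0 : G = 0 := hBG hB0
      have hC1 : C = 1 := by rw [hCB, hB0]; ring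
      have hv0 : G - y = 0 := by nlinarith
      nlinarith
    · push_neg at hv
      have hv' : G - y < 0 := by linarith
      have hu' : H - x ≤ 0 := by nlinarith
      have hC0 : C = 0 := by
        rcases eq_or_lt_of_le hC with h | h
        · exact h.symm
        · nlinarith [mul_nonpos_of_nonneg_of_nonpos hB hu']
      have hH0 : H = 0 := hCH hC0
      have hB1 : B = 1 := by linarith [hCB ▸ hC0]
      have hu0 : H - x = 0 := by nlinarith [mul_nonpos_of_nonneg_of_nonpos hC hv'.le]
      nlinarith
  · rintro ⟨h1, h2⟩
    refine ⟨by nlinarith, by nlinarith, by nlinarith⟩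
end

section
/- The parametrized X-density matrix M (with x ∈ [0,H], y ∈ [0,G]) has rank 1 if and only if (x = H, y = 0, B = 0) or (x = 0, y = G, C = 0). -/
open Real Complex Matrix Polynomial
open scoped ComplexOrder

lemma le_rank_of_isUnit_submatrix {k : ℕ} (M : Matrix (Fin 4) (Fin 4) ℂ)
    (f g : Fin k → Fin 4) (h : IsUnit (M.submatrix f g)) : k ≤ M.rank := by
  have h1 : (M.submatrix f g).rank = k := by
    rw [Matrix.rank_of_isUnit _ h, Fintype.card_fin]
  have h2 : M.submatrix f g =
      ((1 : Matrix (Fin 4) (Fin 4) ℂ).submatrix f (Equiv.refl _)) *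
        (M * ((1 : Matrix (Fin 4) (Fin 4) ℂ).submatrix (Equiv.refl _) g)) := by
    rw [Matrix.mul_submatrix_one, Matrix.one_submatrix_mul]
    simp
  calc k = (M.submatrix f g).rank := h1.symm
    _ ≤ (M * ((1 : Matrix (Fin 4) (Fin 4) ℂ).submatrix (Equiv.refl _) g)).rank := by
        rw [h2]; exact Matrix.rank_mul_le_right _ _
    _ ≤ M.rank := Matrix.rank_mul_le_left _ _

lemma two_le_rank (M : Matrix (Fin 4) (Fin 4) ℂ) (i j k l : Fin 4)
    (h : M i k * M j l - M i l * M j k ≠ 0) : 2 ≤ M.rank := by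
  apply le_rank_of_isUnit_submatrix M ![i, j] ![k, l]
  rw [Matrix.isUnit_iff_isUnit_det]
  have : (M.submatrix ![i, j] ![k, l]).det = M i k * M j l - M i l * M j k := by
    rw [Matrix.det_fin_two]; simp
  rw [this]
  exact isUnit_iff_ne_zero.mpr h

lemma one_le_rank (M : Matrix (Fin 4) (Fin 4) ℂ) (i j : Fin 4)
    (h : M i j ≠ 0) : 1 ≤ M.rank := by
  apply le_rank_of_isUnit_submatrix M ![i] ![j]
  rw [Matrix.isUnit_iff_isUnit_det]
  have : (M.submatrix ![i] ![j]).det = M i j := by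
    rw [Matrix.det_fin_one]; simp
  rw [this]
  exact isUnit_iff_ne_zero.mpr h

lemma rank_vecMulVec_le4 (v w : Fin 4 → ℂ) : (Matrix.vecMulVec v w).rank ≤ 1 := by
  rw [Matrix.vecMulVec_eq (Fin 1)]
  exact (Matrix.rank_mul_le_left _ _).trans
    ((Matrix.rank_le_card_width _).trans_eq (by simp))

set_option maxHeartbeats 1000000 in
theorem stmt4 (θ φ ψ x y μ ν : ℝ)
    (hθ : θ ∈ Set.Icc 0 (Real.pi / 2)) (hφ : φ ∈ Set.Icc 0 (Real.pi / 2))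
    (hψ : ψ ∈ Set.Icc 0 (Real.pi / 2))
    (hμ : μ ∈ Set.Icc 0 (2 * Real.pi)) (hν : ν ∈ Set.Icc 0 (2 * Real.pi))
    (B C G H : ℝ)
    (hB : B = (Real.sin θ)^2 * (1 - (Real.sin φ)^2 * (Real.sin ψ)^2))
    (hC : C = 1 - B)
    (hG : G = (Real.sin θ)^4 * (Real.sin φ)^2 * (Real.cos φ)^2 * (Real.cos ψ)^2)
    (hH : H = (Real.sin θ)^2 * (Real.cos θ)^2 * (Real.sin φ)^2 * (Real.sin ψ)^2)
    (hx : x ∈ Set.Icc 0 H) (hy : y ∈ Set.Icc 0 G) :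
    (Xmat θ φ ψ x y μ ν).rank = 1 ↔
      ((x = H ∧ y = 0 ∧ B = 0) ∨ (x = 0 ∧ y = G ∧ C = 0)) := by
  have pi2 : Real.pi / 2 ≤ Real.pi := by linarith [Real.pi_pos]
  have hsθ : 0 ≤ Real.sin θ := Real.sin_nonneg_of_nonneg_of_le_pi hθ.1 (hθ.2.trans pi2)
  have hcθ : 0 ≤ Real.cos θ := Real.cos_nonneg_of_mem_Icc ⟨by linarith [hθ.1, Real.pi_pos], hθ.2⟩
  have hsφ : 0 ≤ Real.sin φ := Real.sin_nonneg_of_nonneg_of_le_pi hφ.1 (hφ.2.trans pi2)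
  have hcφ : 0 ≤ Real.cos φ := Real.cos_nonneg_of_mem_Icc ⟨by linarith [hφ.1, Real.pi_pos], hφ.2⟩
  have hsψ : 0 ≤ Real.sin ψ := Real.sin_nonneg_of_nonneg_of_le_pi hψ.1 (hψ.2.trans pi2)
  have hcψ : 0 ≤ Real.cos ψ := Real.cos_nonneg_of_mem_Icc ⟨by linarith [hψ.1, Real.pi_pos], hψ.2⟩
  obtain ⟨a, ha_def⟩ : ∃ t : ℝ, t = (Real.cos θ)^2 := ⟨_, rfl⟩
  obtain ⟨b, hb_def⟩ : ∃ t : ℝ, t = (Real.sin θ)^2 * (Real.cos φ)^2 := ⟨_, rfl⟩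
  obtain ⟨c, hc_def⟩ : ∃ t : ℝ, t = (Real.sin θ)^2 * (Real.sin φ)^2 * (Real.cos ψ)^2 := ⟨_, rfl⟩
  obtain ⟨d, hd_def⟩ : ∃ t : ℝ, t = (Real.sin θ)^2 * (Real.sin φ)^2 * (Real.sin ψ)^2 := ⟨_, rfl⟩
  have ha : 0 ≤ a := by rw [ha_def]; positivity
  have hb : 0 ≤ b := by rw [hb_def]; positivity
  have hc' : 0 ≤ c := by rw [hc_def]; positivity
  have hd : 0 ≤ d := by rw [hd_def]; positivity
  have hBbc : B = b + c := by
    rw [hB, hb_def, hc_def]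
    linear_combination (- (Real.sin θ)^2 * (Real.sin φ)^2) * (Real.sin_sq_add_cos_sq ψ)
      - (Real.sin θ)^2 * (Real.sin_sq_add_cos_sq φ)
  have hCad : C = a + d := by
    rw [hC, hB, ha_def, hd_def]
    linear_combination - (Real.sin_sq_add_cos_sq θ)
  have hHad : H = a * d := by rw [hH, ha_def, hd_def]; ring
  have hGbc : G = b * c := by rw [hG, hb_def, hc_def]; ring
  -- entry lemmas
  set M := Xmat θ φ ψ x y μ ν with hM_def
  have m00 : M 0 0 = ((a : ℝ) : ℂ) := by rw [ha_def]; simp [hM_def, Xmat]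
  have m11 : M 1 1 = ((b : ℝ) : ℂ) := by rw [hb_def]; simp [hM_def, Xmat]
  have m22 : M 2 2 = ((c : ℝ) : ℂ) := by rw [hc_def]; simp [hM_def, Xmat]
  have m33 : M 3 3 = ((d : ℝ) : ℂ) := by rw [hd_def]; simp [hM_def, Xmat]
  have m03 : M 0 3 = (Real.sqrt x : ℂ) * Complex.exp (Complex.I * μ) := by simp [hM_def, Xmat]
  have m30 : M 3 0 = (Real.sqrt x : ℂ) * Complex.exp (-Complex.I * μ) := by simp [hM_def, Xmat]
  have m12 : M 1 2 = (Real.sqrt y : ℂ) * Complex.exp (Complex.I * ν) := by simp [hM_def, Xmat]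
  have m21 : M 2 1 = (Real.sqrt y : ℂ) * Complex.exp (-Complex.I * ν) := by simp [hM_def, Xmat]
  have m01 : M 0 1 = 0 := by simp [hM_def, Xmat]
  have m10 : M 1 0 = 0 := by simp [hM_def, Xmat]
  have m02 : M 0 2 = 0 := by simp [hM_def, Xmat]
  have m20 : M 2 0 = 0 := by simp [hM_def, Xmat]
  have m13 : M 1 3 = 0 := by simp [hM_def, Xmat]
  have m31 : M 3 1 = 0 := by simp [hM_def, Xmat]
  have m23 : M 2 3 = 0 := by simp [hM_def, Xmat]
  have m32 : M 3 2 = 0 := by simp [hM_def, Xmat]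
  have hexpμ : Complex.exp (Complex.I * μ) * Complex.exp (-Complex.I * μ) = 1 := by
    rw [← Complex.exp_add, show Complex.I * (μ:ℂ) + -Complex.I * μ = 0 by ring, Complex.exp_zero]
  have hexpν : Complex.exp (Complex.I * ν) * Complex.exp (-Complex.I * ν) = 1 := by
    rw [← Complex.exp_add, show Complex.I * (ν:ℂ) + -Complex.I * ν = 0 by ring, Complex.exp_zero]
  have hxx : (Real.sqrt x : ℂ) * Real.sqrt x = (x : ℂ) := by
    norm_cast; exact Real.mul_self_sqrt hx.1
  have hyy : (Real.sqrt y : ℂ) * Real.sqrt y = (y : ℂ) := by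
    norm_cast; exact Real.mul_self_sqrt hy.1
  constructor
  · -- forward direction
    intro h
    have not2 : ¬ (2 ≤ M.rank) := by rw [h]; omega
    have hxH : x = H := by
      by_contra hne
      apply not2
      apply two_le_rank M 0 3 0 3
      rw [m00, m33, m03, m30]
      have : ((Real.sqrt x : ℂ) * Complex.exp (Complex.I * μ)) *
          ((Real.sqrt x : ℂ) * Complex.exp (-Complex.I * μ)) = (x : ℂ) := by
        rw [mul_mul_mul_comm, hxx, hexpμ, mul_one]
      rw [this]
      rw [show ((a:ℝ):ℂ) * ((d:ℝ):ℂ) - (x:ℂ) = (((a * d - x : ℝ)):ℂ) by push_cast; ring]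
      rw [Complex.ofReal_ne_zero]
      rw [← hHad]
      intro hz
      exact hne (by linarith)
    have hyG : y = G := by
      by_contra hne
      apply not2
      apply two_le_rank M 1 2 1 2
      rw [m11, m22, m12, m21]
      have : ((Real.sqrt y : ℂ) * Complex.exp (Complex.I * ν)) *
          ((Real.sqrt y : ℂ) * Complex.exp (-Complex.I * ν)) = (y : ℂ) := by
        rw [mul_mul_mul_comm, hyy, hexpν, mul_one]
      rw [this]
      rw [show ((b:ℝ):ℂ) * ((c:ℝ):ℂ) - (y:ℂ) = (((b * c - y : ℝ)):ℂ) by push_cast; ring]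
      rw [Complex.ofReal_ne_zero]
      rw [← hGbc]
      intro hz
      exact hne (by linarith)
    have hBC : B = 0 ∨ C = 0 := by
      by_contra hcon
      push_neg at hcon
      have hBpos : 0 < B := lt_of_le_of_ne (by linarith [hBbc]) (Ne.symm hcon.1)
      have hCpos : 0 < C := lt_of_le_of_ne (by linarith [hCad]) (Ne.symm hcon.2)
      have hbc : 0 < b ∨ 0 < c := by
        by_contra hh; push_neg at hh
        rw [hBbc] at hBpos; linarith [hh.1, hh.2]
      have had : 0 < a ∨ 0 < d := by
        by_contra hh; push_neg at hh
        rw [hCad] at hCpos; linarith [hh.1, hh.2]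
      apply not2
      rcases had with hA | hD
      · rcases hbc with hbp | hcp
        · apply two_le_rank M 0 1 0 1
          rw [m00, m11, m01, m10]
          simp only [mul_zero, sub_zero]
          rw [show ((a:ℝ):ℂ) * ((b:ℝ):ℂ) = (((a*b : ℝ)):ℂ) by push_cast; ring,
            Complex.ofReal_ne_zero]
          exact ne_of_gt (mul_pos hA hbp)
        · apply two_le_rank M 0 2 0 2
          rw [m00, m22, m02, m20]
          simp only [mul_zero, sub_zero]
          rw [show ((a:ℝ):ℂ) * ((c:ℝ):ℂ) = (((a*c : ℝ)):ℂ) by push_cast; ring,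
            Complex.ofReal_ne_zero]
          exact ne_of_gt (mul_pos hA hcp)
      · rcases hbc with hbp | hcp
        · apply two_le_rank M 3 1 3 1
          rw [m33, m11, m31, m13]
          simp only [mul_zero, sub_zero]
          rw [show ((d:ℝ):ℂ) * ((b:ℝ):ℂ) = (((d*b : ℝ)):ℂ) by push_cast; ring,
            Complex.ofReal_ne_zero]
          exact ne_of_gt (mul_pos hD hbp)
        · apply two_le_rank M 3 2 3 2
          rw [m33, m22, m32, m23]
          simp only [mul_zero, sub_zero]
          rw [show ((d:ℝ):ℂ) * ((c:ℝ):ℂ) = (((d*c : ℝ)):ℂ) by push_cast; ring,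
            Complex.ofReal_ne_zero]
          exact ne_of_gt (mul_pos hD hcp)
    rcases hBC with hB0 | hC0
    · left
      refine ⟨hxH, ?_, hB0⟩
      have hb0 : b = 0 ∧ c = 0 := by
        constructor <;> linarith [hBbc, hB0]
      have hG0 : G = 0 := by rw [hGbc, hb0.1]; ring
      have := hy.2
      rw [hG0] at this
      linarith [hy.1]
    · right
      have ha0 : a = 0 ∧ d = 0 := by
        constructor <;> linarith [hCad, hC0]
      have hH0 : H = 0 := by rw [hHad, ha0.1]; ring
      have hx0 : x = 0 := by
        have := hx.2; rw [hH0] at this; linarith [hx.1]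
      exact ⟨hx0, hyG, hC0⟩
  · -- backward direction
    intro h
    rcases h with ⟨hxH, hy0, hB0⟩ | ⟨hx0, hyG, hC0⟩
    · -- outer block case: B = 0
      have hb0 : b = 0 := by linarith [hBbc, hB0]
      have hc0 : c = 0 := by linarith [hBbc, hB0]
      have hsc : Real.sin θ * Real.cos φ = 0 := by
        have h2 : (Real.sin θ * Real.cos φ) ^ 2 = 0 := by
          rw [mul_pow, ← hb_def]; exact hb0
        exact pow_eq_zero_iff two_ne_zero |>.mp h2
      have hscψ : Real.sin θ * Real.sin φ * Real.cos ψ = 0 := by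
        have h2 : (Real.sin θ * Real.sin φ * Real.cos ψ) ^ 2 = 0 := by
          rw [mul_pow, mul_pow, ← hc_def]; exact hc0
        exact pow_eq_zero_iff two_ne_zero |>.mp h2
      have hsqx : Real.sqrt x = Real.sin θ * Real.cos θ * Real.sin φ * Real.sin ψ := by
        rw [hxH, hH, show (Real.sin θ)^2 * (Real.cos θ)^2 * (Real.sin φ)^2 * (Real.sin ψ)^2
          = (Real.sin θ * Real.cos θ * Real.sin φ * Real.sin ψ)^2 by ring]
        exact Real.sqrt_sq (by positivity)
      have hsqy : Real.sqrt y = 0 := by rw [hy0, Real.sqrt_zero]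
      have hscC' : Complex.sin (θ:ℂ) * Complex.cos (φ:ℂ) = 0 := by
        have := congrArg (Complex.ofReal) hsc; push_cast at this; exact this
      have hscψC' : Complex.sin (θ:ℂ) * Complex.sin (φ:ℂ) * Complex.cos (ψ:ℂ) = 0 := by
        have := congrArg (Complex.ofReal) hscψ; push_cast at this; exact this
      have hMeq : M = Matrix.vecMulVec
          ![(Real.cos θ : ℂ), 0, 0,
            ((Real.sin θ * Real.sin φ * Real.sin ψ : ℝ) : ℂ) * Complex.exp (-Complex.I * μ)]
          ![(Real.cos θ : ℂ), 0, 0,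
            ((Real.sin θ * Real.sin φ * Real.sin ψ : ℝ) : ℂ) * Complex.exp (Complex.I * μ)] := by
        have hexpμ' : Complex.exp (Complex.I * (μ:ℂ)) *
            Complex.exp (-(Complex.I * (μ:ℂ))) = 1 := by
          rw [← Complex.exp_add]; simp
        rw [hM_def]
        ext i j
        fin_cases i <;> fin_cases j <;>
          simp [Xmat, Matrix.vecMulVec, hsqx, hsqy, Matrix.vecHead, Matrix.vecTail]
        · ring
        · ring
        · exact mul_eq_zero.mp hscC'
        · rcases mul_eq_zero.mp hscψC' with h' | h'
          · exact Or.inl (mul_eq_zero.mp h')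
          · exact Or.inr h'
        · ring
        · linear_combination
            (-(Complex.sin (θ:ℂ) * Complex.sin (φ:ℂ) * Complex.sin (ψ:ℂ))^2) * hexpμ'
      have hC1 : a + d = 1 := by
        have h' : C = 1 := by rw [hC, hB0]; ring
        linarith [hCad]
      have had : a ≠ 0 ∨ d ≠ 0 := by
        by_contra hh; push_neg at hh
        rw [hh.1, hh.2] at hC1; norm_num at hC1
      have h1 : 1 ≤ M.rank := by
        rcases had with hA | hD
        · exact one_le_rank M 0 0 (by rw [m00]; exact_mod_cast hA)
        · exact one_le_rank M 3 3 (by rw [m33]; exact_mod_cast hD)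
      have h2 : M.rank ≤ 1 := by rw [hMeq]; exact rank_vecMulVec_le4 _ _
      omega
    · -- inner block case: C = 0
      have ha0 : a = 0 := by linarith [hCad, hC0]
      have hd0 : d = 0 := by linarith [hCad, hC0]
      have hct : Real.cos θ = 0 := by
        have h2 : (Real.cos θ) ^ 2 = 0 := ha_def ▸ ha0
        exact pow_eq_zero_iff two_ne_zero |>.mp h2
      have hsp : Real.sin θ * Real.sin φ * Real.sin ψ = 0 := by
        have h2 : (Real.sin θ * Real.sin φ * Real.sin ψ) ^ 2 = 0 := by
          rw [mul_pow, mul_pow, ← hd_def]; exact hd0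
        exact pow_eq_zero_iff two_ne_zero |>.mp h2
      have hsqx : Real.sqrt x = 0 := by rw [hx0, Real.sqrt_zero]
      have hsqy : Real.sqrt y =
          (Real.sin θ * Real.cos φ) * (Real.sin θ * Real.sin φ * Real.cos ψ) := by
        rw [hyG, hG, show (Real.sin θ)^4 * (Real.sin φ)^2 * (Real.cos φ)^2 * (Real.cos ψ)^2
          = ((Real.sin θ * Real.cos φ) * (Real.sin θ * Real.sin φ * Real.cos ψ))^2 by ring]
        exact Real.sqrt_sq (by positivity)
      have hctC' : Complex.cos (θ:ℂ) = 0 := by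
        have := congrArg (Complex.ofReal) hct; push_cast at this; exact this
      have hspC' : Complex.sin (θ:ℂ) * Complex.sin (φ:ℂ) * Complex.sin (ψ:ℂ) = 0 := by
        have := congrArg (Complex.ofReal) hsp; push_cast at this; exact this
      have hMeq : M = Matrix.vecMulVec
          ![0, ((Real.sin θ * Real.cos φ : ℝ) : ℂ),
            ((Real.sin θ * Real.sin φ * Real.cos ψ : ℝ) : ℂ) * Complex.exp (-Complex.I * ν), 0]
          ![0, ((Real.sin θ * Real.cos φ : ℝ) : ℂ),
            ((Real.sin θ * Real.sin φ * Real.cos ψ : ℝ) : ℂ) * Complex.exp (Complex.I * ν), 0] := by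
        have hexpν' : Complex.exp (Complex.I * (ν:ℂ)) *
            Complex.exp (-(Complex.I * (ν:ℂ))) = 1 := by
          rw [← Complex.exp_add]; simp
        rw [hM_def]
        ext i j
        fin_cases i <;> fin_cases j <;>
          simp [Xmat, Matrix.vecMulVec, hsqx, hsqy, Matrix.vecHead, Matrix.vecTail]
        · exact hctC'
        · ring
        · ring
        · ring
        · linear_combination
            (-(Complex.sin (θ:ℂ) * Complex.sin (φ:ℂ) * Complex.cos (ψ:ℂ))^2) * hexpν'
        · rcases mul_eq_zero.mp hspC' with h' | h'
          · exact Or.inl (mul_eq_zero.mp h')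
          · exact Or.inr h'
      have hB1 : b + c = 1 := by
        have h' : B = 1 := by rw [hC] at hC0; linarith
        linarith [hBbc]
      have hbc : b ≠ 0 ∨ c ≠ 0 := by
        by_contra hh; push_neg at hh
        rw [hh.1, hh.2] at hB1; norm_num at hB1
      have h1 : 1 ≤ M.rank := by
        rcases hbc with hbn | hcn
        · exact one_le_rank M 1 1 (by rw [m11]; exact_mod_cast hbn)
        · exact one_le_rank M 2 2 (by rw [m22]; exact_mod_cast hcn)
      have h2 : M.rank ≤ 1 := by rw [hMeq]; exact rank_vecMulVec_le4 _ _
      omega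
end

section
/- The parametrized X-density matrix M (with x ∈ [0,H], y ∈ [0,G]) has rank 4 if and only if x < H, y < G, and BC > 0. -/
open Real Complex Matrix Polynomial
open scoped ComplexOrder

lemma rank4_iff_aux (M : Matrix (Fin 4) (Fin 4) ℂ) : M.rank = 4 ↔ M.det ≠ 0 := by
  constructor
  · intro h hdet
    have hU : ¬ IsUnit M := by
      rw [Matrix.isUnit_iff_isUnit_det, hdet]; exact not_isUnit_zero
    rw [← Matrix.mulVec_surjective_iff_isUnit] at hU
    have hrfl : M.rank = Module.finrank ℂ (LinearMap.range M.mulVecLin) := rfl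
    have hr : LinearMap.range M.mulVecLin = ⊤ := by
      apply Submodule.eq_top_of_finrank_eq
      rw [← hrfl, h]
      simp
    exact hU (LinearMap.range_eq_top.mp hr)
  · intro h
    exact Matrix.rank_of_isUnit M (Matrix.isUnit_iff_isUnit_det M |>.mpr h.isUnit) |>.trans (by simp)

lemma det4_aux (a b c d e f g h i j k l m n o p : ℂ) :
    (!![a,b,c,d;e,f,g,h;i,j,k,l;m,n,o,p]).det =
      a*(f*(k*p-l*o)-g*(j*p-l*n)+h*(j*o-k*n))
      - b*(e*(k*p-l*o)-g*(i*p-l*m)+h*(i*o-k*m))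
      + c*(e*(j*p-l*n)-f*(i*p-l*m)+h*(i*n-j*m))
      - d*(e*(j*o-k*n)-f*(i*o-k*m)+g*(i*n-j*m)) := by
  simp [Matrix.det_succ_row_zero, Fin.sum_univ_succ, show Fin.succAbove (1:Fin 4) (2:Fin 3) = 3 from rfl, show Fin.succAbove (2:Fin 4) (2:Fin 3) = 3 from rfl, show Fin.succAbove (3:Fin 4) (2:Fin 3) = 2 from rfl]
  ring

set_option maxHeartbeats 1000000 in
lemma xdet_aux (θ φ ψ x y μ ν : ℝ) (hx : 0 ≤ x) (hy : 0 ≤ y) :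
    (Xmat θ φ ψ x y μ ν).det =
      ((((Real.sin θ)^2 * (Real.cos θ)^2 * (Real.sin φ)^2 * (Real.sin ψ)^2 - x) *
        ((Real.sin θ)^4 * (Real.sin φ)^2 * (Real.cos φ)^2 * (Real.cos ψ)^2 - y) : ℝ) : ℂ) := by
  have hex : Complex.exp (Complex.I * (μ : ℂ)) * Complex.exp (-Complex.I * (μ : ℂ)) = 1 := by
    rw [← Complex.exp_add]; ring_nf; exact Complex.exp_zero
  have hey : Complex.exp (Complex.I * (ν : ℂ)) * Complex.exp (-Complex.I * (ν : ℂ)) = 1 := by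
    rw [← Complex.exp_add]; ring_nf; exact Complex.exp_zero
  have hsx : (Real.sqrt x : ℂ) * (Real.sqrt x : ℂ) = (x : ℂ) := by
    norm_cast; exact Real.mul_self_sqrt hx
  have hsy : (Real.sqrt y : ℂ) * (Real.sqrt y : ℂ) = (y : ℂ) := by
    norm_cast; exact Real.mul_self_sqrt hy
  rw [Xmat, det4_aux]
  push_cast [-Complex.ofReal_cos, -Complex.ofReal_sin]
  set a : ℂ := ((Real.cos θ : ℂ))^2
  set d : ℂ := ((Real.sin θ : ℂ))^2 * ((Real.sin φ : ℂ))^2 * ((Real.sin ψ : ℂ))^2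
  set b : ℂ := ((Real.sin θ : ℂ))^2 * ((Real.cos φ : ℂ))^2
  set c : ℂ := ((Real.sin θ : ℂ))^2 * ((Real.sin φ : ℂ))^2 * ((Real.cos ψ : ℂ))^2
  linear_combination (-(a*d - (Real.sqrt x:ℂ)*(Real.sqrt x:ℂ)*(Complex.exp (Complex.I * (μ : ℂ)) * Complex.exp (-Complex.I * (μ : ℂ)))))*hsy
    + (-(a*d - (Real.sqrt x:ℂ)*(Real.sqrt x:ℂ)*(Complex.exp (Complex.I * (μ : ℂ)) * Complex.exp (-Complex.I * (μ : ℂ)))))*((Real.sqrt y:ℂ)*(Real.sqrt y:ℂ))*hey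
    + (-(b*c - (y:ℂ)))*hsx + (-(b*c - (y:ℂ)))*((Real.sqrt x:ℂ)*(Real.sqrt x:ℂ))*hex

theorem stmt5 (θ φ ψ x y μ ν : ℝ)
    (hθ : θ ∈ Set.Icc 0 (Real.pi / 2)) (hφ : φ ∈ Set.Icc 0 (Real.pi / 2))
    (hψ : ψ ∈ Set.Icc 0 (Real.pi / 2))
    (hμ : μ ∈ Set.Icc 0 (2 * Real.pi)) (hν : ν ∈ Set.Icc 0 (2 * Real.pi))
    (B C G H : ℝ)
    (hB : B = (Real.sin θ)^2 * (1 - (Real.sin φ)^2 * (Real.sin ψ)^2))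
    (hC : C = 1 - B)
    (hG : G = (Real.sin θ)^4 * (Real.sin φ)^2 * (Real.cos φ)^2 * (Real.cos ψ)^2)
    (hH : H = (Real.sin θ)^2 * (Real.cos θ)^2 * (Real.sin φ)^2 * (Real.sin ψ)^2)
    (hx : x ∈ Set.Icc 0 H) (hy : y ∈ Set.Icc 0 G) :
    (Xmat θ φ ψ x y μ ν).rank = 4 ↔ (x < H ∧ y < G ∧ 0 < B * C) := by
  obtain ⟨hx0, hxH⟩ := hx
  obtain ⟨hy0, hyG⟩ := hy
  rw [rank4_iff_aux, xdet_aux θ φ ψ x y μ ν hx0 hy0, Ne, Complex.ofReal_eq_zero]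
  have hHd : (Real.sin θ)^2 * (Real.cos θ)^2 * (Real.sin φ)^2 * (Real.sin ψ)^2 = H := by
    rw [hH]
  have hGd : (Real.sin θ)^4 * (Real.sin φ)^2 * (Real.cos φ)^2 * (Real.cos ψ)^2 = G := by
    rw [hG]
  rw [hHd, hGd]
  constructor
  · intro h
    have h1 : x < H := lt_of_le_of_ne hxH (fun e => h (by rw [e]; ring))
    have h2 : y < G := lt_of_le_of_ne hyG (fun e => h (by rw [e]; ring))
    refine ⟨h1, h2, ?_⟩
    have hH0 : 0 < H := lt_of_le_of_lt hx0 h1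
    have hG0 : 0 < G := lt_of_le_of_lt hy0 h2
    rw [hH] at hH0
    rw [hG] at hG0
    have hθ1 := Real.sin_sq_add_cos_sq θ
    have hφ1 := Real.sin_sq_add_cos_sq φ
    have hψ1 := Real.sin_sq_add_cos_sq ψ
    have e1 : 0 < (Real.sin θ)^2 := by
      rcases (sq_nonneg (Real.sin θ)).lt_or_eq with h' | h'
      · exact h'
      · exfalso; rw [← h'] at hH0; simp at hH0
    have e2 : 0 < (Real.cos θ)^2 := by
      rcases (sq_nonneg (Real.cos θ)).lt_or_eq with h' | h'
      · exact h'
      · exfalso; rw [← h'] at hH0; simp at hH0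
    have e3 : 0 < (Real.sin φ)^2 := by
      rcases (sq_nonneg (Real.sin φ)).lt_or_eq with h' | h'
      · exact h'
      · exfalso; rw [← h'] at hH0; simp at hH0
    have e4 : 0 < (Real.sin ψ)^2 := by
      rcases (sq_nonneg (Real.sin ψ)).lt_or_eq with h' | h'
      · exact h'
      · exfalso; rw [← h'] at hH0; simp at hH0
    have e5 : 0 < (Real.cos φ)^2 := by
      rcases (sq_nonneg (Real.cos φ)).lt_or_eq with h' | h'
      · exact h'
      · exfalso; rw [← h'] at hG0; simp at hG0
    have hs1 : (Real.sin φ)^2 * (Real.sin ψ)^2 < 1 := by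
      nlinarith [mul_le_of_le_one_right (sq_nonneg (Real.sin φ)) (by nlinarith : (Real.sin ψ)^2 ≤ 1)]
    have hs0 : 0 < (Real.sin φ)^2 * (Real.sin ψ)^2 := mul_pos e3 e4
    have hB0 : 0 < B := by rw [hB]; exact mul_pos e1 (by linarith)
    have hC0 : 0 < C := by
      rw [hC, hB]
      nlinarith [mul_pos e1 hs0]
    exact mul_pos hB0 hC0
  · rintro ⟨h1, h2, _⟩
    have : 0 < (H - x) * (G - y) := mul_pos (by linarith) (by linarith)
    exact ne_of_gt this
end

section
/- A two-qubit X-density matrix M is separable (has positive semidefinite partial transpose) if and only if x ≤ min(G, H) and y ≤ min(G, H). -/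
open Real Complex Matrix Polynomial
open scoped ComplexOrder

/-- Partial transpose over the second qubit ((a,b),(c,d)) ↦ M (a,d) (c,b), with
Fin 4 ≃ Fin 2 × Fin 2 via i = 2a + b. -/
def ptB (M : Matrix (Fin 4) (Fin 4) ℂ) : Matrix (Fin 4) (Fin 4) ℂ :=
  !![M 0 0, M 1 0, M 0 2, M 1 2;
     M 0 1, M 1 1, M 0 3, M 1 3;
     M 2 0, M 3 0, M 2 2, M 3 2;
     M 2 1, M 3 1, M 2 3, M 3 3]


lemma key_ineq (b c : ℝ) (hb : 0 ≤ b) (hc : 0 ≤ c) (m v w : ℂ)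
    (hm : Complex.normSq m ≤ b * c) :
    0 ≤ b * Complex.normSq v + c * Complex.normSq w + 2 * (m * (starRingEnd ℂ) v * w).re := by
  have h1 : -(‖m * (starRingEnd ℂ) v * w‖) ≤ (m * (starRingEnd ℂ) v * w).re := by
    have := Complex.abs_re_le_norm (m * (starRingEnd ℂ) v * w)
    cases abs_cases ((m * (starRingEnd ℂ) v * w).re) <;> linarith [norm_nonneg (m * (starRingEnd ℂ) v * w)]
  have h2 : ‖m * (starRingEnd ℂ) v * w‖
      = ‖m‖ * ‖v‖ * ‖w‖ := by
    simp [_root_.map_mul]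
  have hsb := Real.sq_sqrt hb
  have hsc := Real.sq_sqrt hc
  have hA : ‖m‖ ≤ Real.sqrt b * Real.sqrt c := by
    rw [Complex.norm_def, ← Real.sqrt_mul hb]
    exact Real.sqrt_le_sqrt hm
  have hv : Complex.normSq v = (‖v‖)^2 := (Complex.sq_norm v).symm
  have hw : Complex.normSq w = (‖w‖)^2 := (Complex.sq_norm w).symm
  nlinarith [sq_nonneg (Real.sqrt b * ‖v‖ - Real.sqrt c * ‖w‖),
    norm_nonneg v, norm_nonneg w, norm_nonneg m,
    mul_nonneg (norm_nonneg v) (norm_nonneg w),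
    mul_le_mul_of_nonneg_right hA (mul_nonneg (norm_nonneg v) (norm_nonneg w))]

lemma genX_psd_iff (a b c d : ℝ) (m n : ℂ) (ha : 0 ≤ a) (hb : 0 ≤ b) (hc : 0 ≤ c) (hd : 0 ≤ d) :
    (!![(a:ℂ),0,0,n;0,b,m,0;0,star m,c,0;star n,0,0,d]).PosSemidef ↔
      (Complex.normSq m ≤ b * c ∧ Complex.normSq n ≤ a * d) := by
  constructor
  · intro h
    constructor
    · by_cases hm : m = 0
      · simpa [hm] using mul_nonneg hb hc
      · have hquad : ∀ t : ℝ, 0 ≤ b * (t * t) + (-(2 * Complex.normSq m)) * t + c * Complex.normSq m := by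
          intro t
          have h2 := h.dotProduct_mulVec_nonneg ![0, (t:ℂ), -(starRingEnd ℂ) m, 0]
          have he : star ![(0:ℂ), (t:ℂ), -(starRingEnd ℂ) m, 0] ⬝ᵥ
              (!![(a:ℂ),0,0,n;0,b,m,0;0,star m,c,0;star n,0,0,d]) *ᵥ ![0, (t:ℂ), -(starRingEnd ℂ) m, 0]
              = ((b * (t * t) + (-(2 * Complex.normSq m)) * t + c * Complex.normSq m : ℝ) : ℂ) := by
            simp [dotProduct, Matrix.mulVec, Fin.sum_univ_four, Complex.ext_iff,
              Complex.normSq_apply]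
            constructor <;> ring
          rw [he] at h2
          exact_mod_cast h2
        have hd2 := discrim_le_zero hquad
        have hm' : 0 < Complex.normSq m := Complex.normSq_pos.2 hm
        rw [discrim] at hd2
        nlinarith
    · by_cases hn : n = 0
      · simpa [hn] using mul_nonneg ha hd
      · have hquad : ∀ t : ℝ, 0 ≤ a * (t * t) + (-(2 * Complex.normSq n)) * t + d * Complex.normSq n := by
          intro t
          have h2 := h.dotProduct_mulVec_nonneg ![(t:ℂ), 0, 0, -(starRingEnd ℂ) n]
          have he : star ![(t:ℂ), 0, 0, -(starRingEnd ℂ) n] ⬝ᵥ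
              (!![(a:ℂ),0,0,n;0,b,m,0;0,star m,c,0;star n,0,0,d]) *ᵥ ![(t:ℂ), 0, 0, -(starRingEnd ℂ) n]
              = ((a * (t * t) + (-(2 * Complex.normSq n)) * t + d * Complex.normSq n : ℝ) : ℂ) := by
            simp [dotProduct, Matrix.mulVec, Fin.sum_univ_four, Complex.ext_iff,
              Complex.normSq_apply]
            constructor <;> ring
          rw [he] at h2
          exact_mod_cast h2
        have hd2 := discrim_le_zero hquad
        have hn' : 0 < Complex.normSq n := Complex.normSq_pos.2 hn
        rw [discrim] at hd2
        nlinarith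
  · rintro ⟨hm, hn⟩
    apply Matrix.PosSemidef.of_dotProduct_mulVec_nonneg
    · ext i j
      fin_cases i <;> fin_cases j <;> simp [Matrix.conjTranspose_apply]
    · intro v
      have he : star v ⬝ᵥ (!![(a:ℂ),0,0,n;0,b,m,0;0,star m,c,0;star n,0,0,d]) *ᵥ v
          = (((b * Complex.normSq (v 1) + c * Complex.normSq (v 2) + 2 * (m * (starRingEnd ℂ) (v 1) * (v 2)).re)
            + (a * Complex.normSq (v 0) + d * Complex.normSq (v 3) + 2 * (n * (starRingEnd ℂ) (v 0) * (v 3)).re) : ℝ) : ℂ) := by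
        simp [dotProduct, Matrix.mulVec, Fin.sum_univ_four, Complex.ext_iff,
          Complex.normSq_apply]
        constructor <;> ring
      rw [he]
      have := add_nonneg (key_ineq b c hb hc m (v 1) (v 2) hm) (key_ineq a d ha hd n (v 0) (v 3) hn)
      exact_mod_cast this

theorem stmt6 (θ φ ψ x y μ ν : ℝ)
    (hθ : θ ∈ Set.Icc 0 (Real.pi / 2)) (hφ : φ ∈ Set.Icc 0 (Real.pi / 2))
    (hψ : ψ ∈ Set.Icc 0 (Real.pi / 2))
    (hμ : μ ∈ Set.Icc 0 (2 * Real.pi)) (hν : ν ∈ Set.Icc 0 (2 * Real.pi))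
    (G H : ℝ)
    (hG : G = (Real.sin θ)^4 * (Real.sin φ)^2 * (Real.cos φ)^2 * (Real.cos ψ)^2)
    (hH : H = (Real.sin θ)^2 * (Real.cos θ)^2 * (Real.sin φ)^2 * (Real.sin ψ)^2)
    (hx : x ∈ Set.Icc 0 H) (hy : y ∈ Set.Icc 0 G) :
    (ptB (Xmat θ φ ψ x y μ ν)).PosSemidef ↔
      (x ≤ min G H ∧ y ≤ min G H) := by
  obtain ⟨hx0, hxH⟩ := hx
  obtain ⟨hy0, hyG⟩ := hy
  set a : ℝ := (Real.cos θ)^2 with hadef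
  set b : ℝ := (Real.sin θ)^2 * (Real.cos φ)^2 with hbdef
  set c : ℝ := (Real.sin θ)^2 * (Real.sin φ)^2 * (Real.cos ψ)^2 with hcdef
  set d : ℝ := (Real.sin θ)^2 * (Real.sin φ)^2 * (Real.sin ψ)^2 with hddef
  set m : ℂ := (Real.sqrt x : ℂ) * Complex.exp (Complex.I * (μ : ℂ)) with hmdef
  set n : ℂ := (Real.sqrt y : ℂ) * Complex.exp (Complex.I * (ν : ℂ)) with hndef
  have hmat : ptB (Xmat θ φ ψ x y μ ν)
      = !![(a:ℂ),0,0,n;0,b,m,0;0,star m,c,0;star n,0,0,d] := by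
    have hsm : star m = (Real.sqrt x : ℂ) * Complex.exp (-Complex.I * (μ : ℂ)) := by
      rw [hmdef, star_mul']
      congr 1
      · exact Complex.conj_ofReal _
      · rw [Complex.star_def, ← Complex.exp_conj]
        congr 1
        simp [_root_.map_mul, Complex.conj_I, Complex.conj_ofReal]
    have hsn : star n = (Real.sqrt y : ℂ) * Complex.exp (-Complex.I * (ν : ℂ)) := by
      rw [hndef, star_mul']
      congr 1
      · exact Complex.conj_ofReal _
      · rw [Complex.star_def, ← Complex.exp_conj]
        congr 1
        simp [_root_.map_mul, Complex.conj_I, Complex.conj_ofReal]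
    ext i j
    fin_cases i <;> fin_cases j <;>
      simp [ptB, Xmat, hsm, hsn, hadef, hbdef, hcdef, hddef, hmdef, hndef, ← Complex.exp_conj] <;> push_cast <;> ring
  have hne : Complex.normSq (Complex.exp (Complex.I * (μ : ℂ))) = 1 := by
    rw [Complex.normSq_eq_norm_sq, Complex.norm_exp]; simp
  have hne' : Complex.normSq (Complex.exp (Complex.I * (ν : ℂ))) = 1 := by
    rw [Complex.normSq_eq_norm_sq, Complex.norm_exp]; simp
  have hm : Complex.normSq m = x := by
    rw [hmdef, Complex.normSq_mul, hne, Complex.normSq_ofReal, Real.mul_self_sqrt hx0, mul_one]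
  have hn : Complex.normSq n = y := by
    rw [hndef, Complex.normSq_mul, hne', Complex.normSq_ofReal, Real.mul_self_sqrt hy0, mul_one]
  have hbc : b * c = G := by rw [hG, hbdef, hcdef]; ring
  have had : a * d = H := by rw [hH, hadef, hddef]; ring
  rw [hmat, genX_psd_iff a b c d m n (by positivity) (by positivity) (by positivity) (by positivity),
    hm, hn, hbc, had]
  constructor
  · rintro ⟨h1, h2⟩
    exact ⟨le_min h1 hxH, le_min hyG h2⟩
  · rintro ⟨h1, h2⟩
    exact ⟨le_of_le_of_eq (le_trans h1 (min_le_left _ _)) rfl, le_trans h2 (min_le_right _ _)⟩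
end

section
/- For a two-qubit X-density matrix ρ (in the computational basis), the concurrence C(ρ) = max[0, √λ₁ − √λ₂ − √λ₃ − √λ₄] (λᵢ the decreasing eigenvalues of ρ(σ₂⊗σ₂)ρ*(σ₂⊗σ₂)) equals 2·max[0, |ρ₂₃| − √(ρ₁₁ρ₄₄), |ρ₁₄| − √(ρ₂₂ρ₃₃)]. -/
open Real Complex Matrix Polynomial
open scoped ComplexOrder

/-- σ₂ ⊗ σ₂, where σ₂ is the Pauli-y matrix. -/
def sigma2sigma2 : Matrix (Fin 4) (Fin 4) ℂ :=
  !![0, 0, 0, -1;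
     0, 0, 1, 0;
     0, 1, 0, 0;
     -1, 0, 0, 0]

set_option maxHeartbeats 2000000 in
lemma charpoly_X_aux (A D Z Z' B2 C2 W W' : ℂ) (s t u v : ℝ)
    (e1 : ((s:ℂ))^2 = A*D) (e2 : ((t:ℂ))^2 = Z*Z')
    (e3 : ((u:ℂ))^2 = B2*C2) (e4 : ((v:ℂ))^2 = W*W') :
    (!![A*D + Z*Z', 0, 0, 2*A*Z;
        0, B2*C2 + W*W', 2*B2*W, 0;
        0, 2*C2*W', B2*C2 + W*W', 0;
        2*D*Z', 0, 0, A*D + Z*Z'] : Matrix (Fin 4) (Fin 4) ℂ).charpoly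
      = (X - C (((s+t)^2 : ℝ) : ℂ)) * (X - C (((s-t)^2 : ℝ) : ℂ)) *
        (X - C (((u+v)^2 : ℝ) : ℂ)) * (X - C (((u-v)^2 : ℝ) : ℂ)) := by
  have e1' : (C ((s:ℂ)))^2 = C A * C D := by rw [← _root_.map_mul, ← _root_.map_pow, e1]
  have e2' : (C ((t:ℂ)))^2 = C Z * C Z' := by rw [← _root_.map_mul, ← _root_.map_pow, e2]
  have e3' : (C ((u:ℂ)))^2 = C B2 * C C2 := by rw [← _root_.map_mul, ← _root_.map_pow, e3]
  have e4' : (C ((v:ℂ)))^2 = C W * C W' := by rw [← _root_.map_mul, ← _root_.map_pow, e4]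
  rw [Matrix.charpoly]
  have hcm : (!![A*D + Z*Z', 0, 0, 2*A*Z;
        0, B2*C2 + W*W', 2*B2*W, 0;
        0, 2*C2*W', B2*C2 + W*W', 0;
        2*D*Z', 0, 0, A*D + Z*Z'] : Matrix (Fin 4) (Fin 4) ℂ).charmatrix =
      !![X - C (A*D + Z*Z'), 0, 0, - C (2*A*Z);
        0, X - C (B2*C2 + W*W'), - C (2*B2*W), 0;
        0, - C (2*C2*W'), X - C (B2*C2 + W*W'), 0;
        - C (2*D*Z'), 0, 0, X - C (A*D + Z*Z')] := by
    ext i j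
    fin_cases i <;> fin_cases j <;>
      simp [charmatrix_apply_eq, charmatrix_apply_ne]
  rw [hcm]
  have hcs : (Fin.castSucc 2 : Fin 4) = 2 := rfl
  have hcs1 : (Fin.castSucc 1 : Fin 4) = 1 := rfl
  have hcs0 : (Fin.castSucc 0 : Fin 4) = 0 := rfl
  have hsa : (Fin.succAbove (3 : Fin 4) (2 : Fin 3) : Fin 4) = 2 := rfl
  simp [hcs, hcs1, hcs0, hsa, Matrix.det_succ_row_zero, Fin.sum_univ_succ, Complex.ofReal_pow,
    Complex.ofReal_add, Complex.ofReal_sub, _root_.map_mul, _root_.map_add, _root_.map_sub,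
    _root_.map_pow, map_ofNat]
  linear_combination
    (((X - C B2*C C2 - C W*C W')^2 - 4*(C B2*C C2*C W*C W')) *
      (2*X - C A*C D - C Z*C Z' - (C ((s:ℂ)))^2 - (C ((t:ℂ)))^2) +
      4*((X - C B2*C C2 - C W*C W')^2 - 4*(C B2*C C2*C W*C W'))*(C Z*C Z')) * e1'
    + (((X - C B2*C C2 - C W*C W')^2 - 4*(C B2*C C2*C W*C W')) *
      (2*X - C A*C D - C Z*C Z' - (C ((s:ℂ)))^2 - (C ((t:ℂ)))^2) +
      4*((X - C B2*C C2 - C W*C W')^2 - 4*(C B2*C C2*C W*C W'))*(C ((s:ℂ)))^2) * e2'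
    + (((X - (C ((s:ℂ)) + C ((t:ℂ)))^2) * (X - (C ((s:ℂ)) - C ((t:ℂ)))^2)) *
      (2*X - C B2*C C2 - C W*C W' - (C ((u:ℂ)))^2 - (C ((v:ℂ)))^2) +
      4*((X - (C ((s:ℂ)) + C ((t:ℂ)))^2) * (X - (C ((s:ℂ)) - C ((t:ℂ)))^2))*(C W*C W')) * e3'
    + (((X - (C ((s:ℂ)) + C ((t:ℂ)))^2) * (X - (C ((s:ℂ)) - C ((t:ℂ)))^2)) *
      (2*X - C B2*C C2 - C W*C W' - (C ((u:ℂ)))^2 - (C ((v:ℂ)))^2) +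
      4*((X - (C ((s:ℂ)) + C ((t:ℂ)))^2) * (X - (C ((s:ℂ)) - C ((t:ℂ)))^2))*(C ((u:ℂ)))^2) * e4'

set_option maxHeartbeats 2000000 in
theorem stmt8 (ρ : Matrix (Fin 4) (Fin 4) ℂ)
    (hPSD : ρ.PosSemidef) (htr : ρ.trace = 1)
    (hXform : ρ 0 1 = 0 ∧ ρ 0 2 = 0 ∧ ρ 1 0 = 0 ∧ ρ 1 3 = 0 ∧
              ρ 2 0 = 0 ∧ ρ 2 3 = 0 ∧ ρ 3 1 = 0 ∧ ρ 3 2 = 0)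
    (lam : Fin 4 → ℝ)
    (hnn : ∀ i, 0 ≤ lam i)
    (hdec : lam 0 ≥ lam 1 ∧ lam 1 ≥ lam 2 ∧ lam 2 ≥ lam 3)
    (heig : (ρ * sigma2sigma2 * ρ.map (starRingEnd ℂ) * sigma2sigma2).charpoly =
      ∏ i : Fin 4, (X - Polynomial.C ((lam i : ℂ)))) :
    max 0 (Real.sqrt (lam 0) - Real.sqrt (lam 1) - Real.sqrt (lam 2) - Real.sqrt (lam 3)) =
      2 * max 0 (max (‖ρ 1 2‖ - Real.sqrt ((ρ 0 0).re * (ρ 3 3).re))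
                     (‖ρ 0 3‖ - Real.sqrt ((ρ 1 1).re * (ρ 2 2).re))) := by
  obtain ⟨h01,h02,h10,h13,h20,h23,h31,h32⟩ := hXform
  have hherm := hPSD.1
  have hconj : ∀ i j, ρ j i = (starRingEnd ℂ) (ρ i j) := by
    intro i j
    conv_lhs => rw [← hherm]
    simp [Matrix.conjTranspose_apply]
  have hdr : ∀ i, ρ i i = ((ρ i i).re : ℂ) := by
    intro i
    have := (hconj i i).symm
    rw [Complex.conj_eq_iff_re] at this
    exact this.symm
  have hdnn : ∀ i, 0 ≤ (ρ i i).re := by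
    intro i
    have h := hPSD.dotProduct_mulVec_nonneg (fun j => if j = i then 1 else 0)
    have hval : star (fun j => if j = i then (1:ℂ) else 0) ⬝ᵥ ρ *ᵥ
        (fun j => if j = i then (1:ℂ) else 0) = ρ i i := by
      fin_cases i <;> simp [dotProduct, Matrix.mulVec, Fin.sum_univ_four]
    rw [hval, hdr i] at h
    exact Complex.zero_le_real.mp h
  set a := (ρ 0 0).re with hadef
  set b := (ρ 1 1).re with hbdef
  set c := (ρ 2 2).re with hcdef
  set d := (ρ 3 3).re with hddef
  set t := ‖ρ 0 3‖ with htdef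
  set v := ‖ρ 1 2‖ with hvdef
  set s := Real.sqrt (a * d) with hsdef
  set u := Real.sqrt (b * c) with hudef
  have han : 0 ≤ a := hdnn 0
  have hbn : 0 ≤ b := hdnn 1
  have hcn : 0 ≤ c := hdnn 2
  have hdn : 0 ≤ d := hdnn 3
  have htn : (0:ℝ) ≤ t := norm_nonneg _
  have hvn : (0:ℝ) ≤ v := norm_nonneg _
  have hsn : (0:ℝ) ≤ s := Real.sqrt_nonneg _
  have hun : (0:ℝ) ≤ u := Real.sqrt_nonneg _
  have hzz03 : ρ 0 3 * (starRingEnd ℂ) (ρ 0 3) = ((t : ℝ) : ℂ)^2 := by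
    rw [Complex.mul_conj, Complex.normSq_eq_norm_sq]
    push_cast
    ring
  have hzz12 : ρ 1 2 * (starRingEnd ℂ) (ρ 1 2) = ((v : ℝ) : ℂ)^2 := by
    rw [Complex.mul_conj, Complex.normSq_eq_norm_sq]
    push_cast
    ring
  -- the two principal-minor bounds
  have hminor03 : t^2 ≤ a * d := by
    have key : ∀ r : ℝ, 0 ≤ a * t^2 * r^2 - 2*t^2*r + d := by
      intro r
      have h := hPSD.dotProduct_mulVec_nonneg ![(r:ℂ) * ρ 0 3, 0, 0, -1]
      have hval : star ![(r:ℂ) * ρ 0 3, 0, 0, -1] ⬝ᵥ ρ *ᵥ ![(r:ℂ) * ρ 0 3, 0, 0, -1]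
          = ((a * t^2 * r^2 - 2*t^2*r + d : ℝ) : ℂ) := by
        simp only [dotProduct, Matrix.mulVec, Fin.sum_univ_four, Matrix.cons_val_zero,
          Matrix.cons_val_one, Matrix.head_cons, Matrix.cons_val_two, Matrix.cons_val_three,
          Matrix.tail_cons, Pi.star_apply, Matrix.cons_val', Matrix.cons_val_fin_one,
          Matrix.empty_val', Matrix.head_fin_const, star_mul', star_neg, star_one,
          _root_.map_mul, map_neg, _root_.map_one,
          Complex.star_def, Complex.conj_ofReal, map_zero, mul_zero, zero_mul, add_zero, zero_add]
        rw [hconj 0 3, hdr 0, hdr 3, ← hadef, ← hddef]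
        push_cast
        linear_combination ((a:ℂ)*(r:ℂ)^2 - 2*(r:ℂ)) * hzz03
      rw [hval] at h
      exact Complex.zero_le_real.mp h
    have hL0 : (0:ℝ) ≤ t^2 := sq_nonneg _
    rcases eq_or_lt_of_le hL0 with hL | hL
    · rw [← hL]; exact mul_nonneg han hdn
    · rcases eq_or_lt_of_le han with ha | ha
      · exfalso
        have h := key ((d+1)/(2*t^2))
        rw [← ha] at h
        field_simp at h
        nlinarith [(div_eq_iff hL.ne').mpr (by ring : (d + 1) * (0 * (d + 1) - t ^ 2 * 2 ^ 2) = -(4*(d+1)) * t^2)]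
      · have h := key (1/a)
        have h2 : 0 ≤ -(t^2/a) + d := by
          have heq : a * t^2 * (1/a)^2 - 2*t^2*(1/a) + d = -(t^2/a) + d := by
            field_simp; ring
          linarith [heq ▸ h]
        have h3 : t^2/a ≤ d := by linarith
        calc t^2 = a * (t^2/a) := by field_simp
          _ ≤ a * d := mul_le_mul_of_nonneg_left h3 han
  have hminor12 : v^2 ≤ b * c := by
    have key : ∀ r : ℝ, 0 ≤ b * v^2 * r^2 - 2*v^2*r + c := by
      intro r
      have h := hPSD.dotProduct_mulVec_nonneg ![0, (r:ℂ) * ρ 1 2, -1, 0]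
      have hval : star ![0, (r:ℂ) * ρ 1 2, -1, 0] ⬝ᵥ ρ *ᵥ ![0, (r:ℂ) * ρ 1 2, -1, 0]
          = ((b * v^2 * r^2 - 2*v^2*r + c : ℝ) : ℂ) := by
        simp only [dotProduct, Matrix.mulVec, Fin.sum_univ_four, Matrix.cons_val_zero,
          Matrix.cons_val_one, Matrix.head_cons, Matrix.cons_val_two, Matrix.cons_val_three,
          Matrix.tail_cons, Pi.star_apply, Matrix.cons_val', Matrix.cons_val_fin_one,
          Matrix.empty_val', Matrix.head_fin_const, star_mul', star_neg, star_one,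
          _root_.map_mul, map_neg, _root_.map_one,
          Complex.star_def, Complex.conj_ofReal, map_zero, mul_zero, zero_mul, add_zero, zero_add]
        rw [hconj 1 2, hdr 1, hdr 2, ← hbdef, ← hcdef]
        push_cast
        linear_combination ((b:ℂ)*(r:ℂ)^2 - 2*(r:ℂ)) * hzz12
      rw [hval] at h
      exact Complex.zero_le_real.mp h
    have hL0 : (0:ℝ) ≤ v^2 := sq_nonneg _
    rcases eq_or_lt_of_le hL0 with hL | hL
    · rw [← hL]; exact mul_nonneg hbn hcn
    · rcases eq_or_lt_of_le hbn with hb | hb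
      · exfalso
        have h := key ((c+1)/(2*v^2))
        rw [← hb] at h
        field_simp at h
        nlinarith [(div_eq_iff hL.ne').mpr (by ring : (c + 1) * (0 * (c + 1) - v ^ 2 * 2 ^ 2) = -(4*(c+1)) * v^2)]
      · have h := key (1/b)
        have h2 : 0 ≤ -(v^2/b) + c := by
          have heq : b * v^2 * (1/b)^2 - 2*v^2*(1/b) + c = -(v^2/b) + c := by
            field_simp; ring
          linarith [heq ▸ h]
        have h3 : v^2/b ≤ c := by linarith
        calc v^2 = b * (v^2/b) := by field_simp
          _ ≤ b * c := mul_le_mul_of_nonneg_left h3 hbn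
  have hts : t ≤ s := by
    have : t = Real.sqrt (t^2) := (Real.sqrt_sq htn).symm
    rw [this, hsdef]
    exact Real.sqrt_le_sqrt hminor03
  have hvu : v ≤ u := by
    have : v = Real.sqrt (v^2) := (Real.sqrt_sq hvn).symm
    rw [this, hudef]
    exact Real.sqrt_le_sqrt hminor12
  -- the matrix product
  have hM : ρ * sigma2sigma2 * ρ.map (starRingEnd ℂ) * sigma2sigma2 =
      !![ρ 0 0*ρ 3 3 + ρ 0 3*(starRingEnd ℂ) (ρ 0 3), 0, 0, 2*ρ 0 0*ρ 0 3;
         0, ρ 1 1*ρ 2 2 + ρ 1 2*(starRingEnd ℂ) (ρ 1 2), 2*ρ 1 1*ρ 1 2, 0;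
         0, 2*ρ 2 2*(starRingEnd ℂ) (ρ 1 2), ρ 1 1*ρ 2 2 + ρ 1 2*(starRingEnd ℂ) (ρ 1 2), 0;
         2*ρ 3 3*(starRingEnd ℂ) (ρ 0 3), 0, 0,
           ρ 0 0*ρ 3 3 + ρ 0 3*(starRingEnd ℂ) (ρ 0 3)] := by
    have hrd : ∀ i, (starRingEnd ℂ) (ρ i i) = ρ i i := fun i => (hconj i i).symm
    ext i j
    fin_cases i <;> fin_cases j <;>
      simp [sigma2sigma2, Matrix.mul_apply, Matrix.vecHead, Matrix.vecTail, Function.comp,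
        Fin.sum_univ_four, Matrix.map_apply,
        h01, h02, h10, h13, h20, h23, h31, h32, hconj 0 3, hconj 1 2,
        hrd 0, hrd 1, hrd 2, hrd 3] <;> ring
  have e1 : ((s:ℝ):ℂ)^2 = ρ 0 0 * ρ 3 3 := by
    rw [hdr 0, hdr 3, ← hadef, ← hddef, ← Complex.ofReal_mul, hsdef, ← Complex.ofReal_pow,
      Real.sq_sqrt (mul_nonneg han hdn)]
  have e3 : ((u:ℝ):ℂ)^2 = ρ 1 1 * ρ 2 2 := by
    rw [hdr 1, hdr 2, ← hbdef, ← hcdef, ← Complex.ofReal_mul, hudef, ← Complex.ofReal_pow,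
      Real.sq_sqrt (mul_nonneg hbn hcn)]
  have hchar : (ρ * sigma2sigma2 * ρ.map (starRingEnd ℂ) * sigma2sigma2).charpoly =
      (X - C (((s+t)^2 : ℝ) : ℂ)) * (X - C (((s-t)^2 : ℝ) : ℂ)) *
      (X - C (((u+v)^2 : ℝ) : ℂ)) * (X - C (((u-v)^2 : ℝ) : ℂ)) := by
    rw [hM]
    exact charpoly_X_aux (ρ 0 0) (ρ 3 3) (ρ 0 3) ((starRingEnd ℂ) (ρ 0 3))
      (ρ 1 1) (ρ 2 2) (ρ 1 2) ((starRingEnd ℂ) (ρ 1 2)) s t u v e1 hzz03.symm e3 hzz12.symm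
  set m : Fin 4 → ℝ := ![(s+t)^2, (s-t)^2, (u+v)^2, (u-v)^2] with hmdef
  have hm0 : m 0 = (s+t)^2 := by simp [hmdef]
  have hm1 : m 1 = (s-t)^2 := by simp [hmdef]
  have hm2 : m 2 = (u+v)^2 := by simp [hmdef]
  have hm3 : m 3 = (u-v)^2 := by simp [hmdef]
  have hpoly : ∏ i : Fin 4, (X - Polynomial.C ((lam i : ℂ))) =
      ∏ i : Fin 4, (X - Polynomial.C ((m i : ℂ))) := by
    rw [← heig, hchar, Fin.prod_univ_four]
    simp only [hm0, hm1, hm2, hm3]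
  have hms : (Finset.univ.val.map lam) = (Finset.univ.val.map m) := by
    have key : ∀ f : Fin 4 → ℝ, ∏ i : Fin 4, (X - Polynomial.C ((f i : ℂ))) =
        (Multiset.map (fun r : ℂ => X - Polynomial.C r)
          (Finset.univ.val.map (fun i => ((f i : ℝ) : ℂ)))).prod := by
      intro f
      rw [Multiset.map_map]
      rfl
    rw [key, key] at hpoly
    have h1 := congrArg Polynomial.roots hpoly
    rw [Polynomial.roots_multiset_prod_X_sub_C, Polynomial.roots_multiset_prod_X_sub_C] at h1
    apply Multiset.map_injective Complex.ofReal_injective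
    rwa [Multiset.map_map, Multiset.map_map]
  -- extract max and sum facts
  have hmem1 : ∀ i, ∃ j, lam j = m i := by
    intro i
    have hm : m i ∈ Finset.univ.val.map m :=
      Multiset.mem_map_of_mem m (Finset.mem_univ i)
    rw [← hms] at hm
    rcases Multiset.mem_map.mp hm with ⟨j, _, hj⟩
    exact ⟨j, hj⟩
  have hmem2 : ∃ j, m j = lam 0 := by
    have hm : lam 0 ∈ Finset.univ.val.map lam :=
      Multiset.mem_map_of_mem lam (Finset.mem_univ (0 : Fin 4))
    rw [hms] at hm
    rcases Multiset.mem_map.mp hm with ⟨j, _, hj⟩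
    exact ⟨j, hj⟩
  have hlam0big : ∀ j, lam j ≤ lam 0 := by
    intro j
    fin_cases j <;> simp only [Fin.zero_eta, Fin.mk_one, Fin.reduceFinMk] <;>
      linarith [hdec.1, hdec.2.1, hdec.2.2]
  have hlam0 : lam 0 = max ((s+t)^2) ((u+v)^2) := by
    apply le_antisymm
    · rcases hmem2 with ⟨j, hj⟩
      rw [← hj]
      have hq1 : (s-t)^2 ≤ (s+t)^2 := by nlinarith
      have hq2 : (u-v)^2 ≤ (u+v)^2 := by nlinarith
      fin_cases j <;> simp only [Fin.zero_eta, Fin.mk_one, Fin.reduceFinMk, hm0, hm1, hm2, hm3]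
      · exact le_max_left _ _
      · exact le_trans hq1 (le_max_left _ _)
      · exact le_max_right _ _
      · exact le_trans hq2 (le_max_right _ _)
    · apply max_le
      · rcases hmem1 0 with ⟨j, hj⟩
        rw [hm0] at hj
        rw [← hj]
        exact hlam0big j
      · rcases hmem1 2 with ⟨j, hj⟩
        rw [hm2] at hj
        rw [← hj]
        exact hlam0big j
  have hsq0 : Real.sqrt (lam 0) = max (s+t) (u+v) := by
    rcases le_total (s+t) (u+v) with h | h
    · rw [hlam0, max_eq_right (by nlinarith), max_eq_right h, Real.sqrt_sq (by linarith)]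
    · rw [hlam0, max_eq_left (by nlinarith), max_eq_left h, Real.sqrt_sq (by linarith)]
  have hsum : Real.sqrt (lam 0) + Real.sqrt (lam 1) + Real.sqrt (lam 2) + Real.sqrt (lam 3)
      = 2*s + 2*u := by
    have e : ∀ f : Fin 4 → ℝ, ((Finset.univ.val.map f).map Real.sqrt).sum =
        Real.sqrt (f 0) + Real.sqrt (f 1) + Real.sqrt (f 2) + Real.sqrt (f 3) := by
      intro f
      rw [Multiset.map_map]
      exact Fin.sum_univ_four (fun i => Real.sqrt (f i))
    have h := congrArg (fun M : Multiset ℝ => (M.map Real.sqrt).sum) hms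
    simp only [e] at h
    rw [h]
    have hm0 : Real.sqrt (m 0) = s + t := by
      simp [hmdef]; exact Real.sqrt_sq (by linarith)
    have hm1 : Real.sqrt (m 1) = s - t := by
      simp [hmdef]; exact Real.sqrt_sq (by linarith)
    have hm2 : Real.sqrt (m 2) = u + v := by
      simp [hmdef]; exact Real.sqrt_sq (by linarith)
    have hm3 : Real.sqrt (m 3) = u - v := by
      simp [hmdef]; exact Real.sqrt_sq (by linarith)
    rw [hm0, hm1, hm2, hm3]
    ring
  -- final arithmetic
  rcases le_total (s+t) (u+v) with h | h
  · rw [max_eq_right h] at hsq0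
    have hmx : max (v - s) (t - u) = v - s := max_eq_left (by linarith)
    rw [hmx]
    rcases le_total (v - s) 0 with h2 | h2
    · rw [max_eq_left h2, max_eq_left (by linarith), mul_zero]
    · rw [max_eq_right h2, max_eq_right (by linarith)]
      linarith
  · rw [max_eq_left h] at hsq0
    have hmx : max (v - s) (t - u) = t - u := max_eq_right (by linarith)
    rw [hmx]
    rcases le_total (t - u) 0 with h2 | h2
    · rw [max_eq_left h2, max_eq_left (by linarith), mul_zero]
    · rw [max_eq_right h2, max_eq_right (by linarith)]
      linarith
end

section
/- For p ∈ [1/2, 1[, c ∈ [0, u] with u = (1 + √(2p−1))/2, the 4×4 matrix ρ₂ with nonzero entries ρ₁₁ = 1 − u, ρ₂₂ = (u + √(u²−c²))/2, ρ₃₃ = (u − √(u²−c²))/2, ρ₂₃ = ρ₃₂ = c/2 is a rank-2 (for c<u or u<1 appropriately, at most rank-2) positive semidefinite density matrix with Tr[ρ₂²] = p and concurrence c. -/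
open Real Matrix

set_option maxHeartbeats 2000000 in
theorem stmt11 (p c u : ℝ)
    (hp : p ∈ Set.Ico (1/2 : ℝ) 1)
    (hu : u = (1 + Real.sqrt (2*p - 1)) / 2)
    (hc : c ∈ Set.Icc 0 u) :
    letI ρ : Matrix (Fin 4) (Fin 4) ℝ :=
      !![1 - u, 0, 0, 0;
         0, (u + Real.sqrt (u^2 - c^2)) / 2, c / 2, 0;
         0, c / 2, (u - Real.sqrt (u^2 - c^2)) / 2, 0;
         0, 0, 0, 0]
    ρ.PosSemidef ∧ ρ.trace = 1 ∧ ρ.rank ≤ 2 ∧ (ρ * ρ).trace = p ∧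
      2 * max 0 (max (|ρ 1 2| - Real.sqrt (ρ 0 0 * ρ 3 3))
                     (|ρ 0 3| - Real.sqrt (ρ 1 1 * ρ 2 2))) = c := by
  obtain ⟨hp1, hp2⟩ := hp
  obtain ⟨hc0, hcu⟩ := hc
  have hs0 : 0 ≤ Real.sqrt (2*p-1) := Real.sqrt_nonneg _
  have hs2 : Real.sqrt (2*p-1) ^ 2 = 2*p-1 := Real.sq_sqrt (by linarith)
  have hs1 : Real.sqrt (2*p-1) < 1 := by nlinarith
  set s := Real.sqrt (2*p-1) with hsdef
  have hu0 : (1:ℝ)/2 ≤ u := by rw [hu]; linarith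
  have hu1 : u < 1 := by rw [hu]; linarith
  have hcc : c^2 ≤ u^2 := by nlinarith
  have hd0 : 0 ≤ Real.sqrt (u^2-c^2) := Real.sqrt_nonneg _
  have hd2 : Real.sqrt (u^2-c^2) ^ 2 = u^2-c^2 := Real.sq_sqrt (by linarith)
  set d := Real.sqrt (u^2-c^2) with hddef
  have hdu : d ≤ u := by nlinarith
  have hA0 : 0 ≤ (u+d)/2 := by linarith
  have hB0 : 0 ≤ (u-d)/2 := by linarith
  set a := Real.sqrt ((u+d)/2) with hadef
  set b := Real.sqrt ((u-d)/2) with hbdef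
  set w := Real.sqrt (1-u) with hwdef
  have ha2 : a * a = (u+d)/2 := Real.mul_self_sqrt hA0
  have hb2 : b * b = (u-d)/2 := Real.mul_self_sqrt hB0
  have hw2 : w * w = 1-u := Real.mul_self_sqrt (by linarith)
  have hab : a * b = c/2 := by
    rw [hadef, hbdef, ← Real.sqrt_mul hA0]
    have : (u+d)/2 * ((u-d)/2) = (c/2)^2 := by nlinarith
    rw [this, Real.sqrt_sq (by linarith)]
  set ρ : Matrix (Fin 4) (Fin 4) ℝ := !![1 - u, 0, 0, 0; 0, (u + d) / 2, c / 2, 0; 0, c / 2, (u - d) / 2, 0; 0, 0, 0, 0] with hρdef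
  have hρ : ρ = !![w, 0; 0, a; 0, b; 0, 0] * !![w, 0; 0, a; 0, b; 0, 0]ᴴ := by
    ext i j
    fin_cases i <;> fin_cases j <;>
      simp [ρ, Matrix.mul_apply, Fin.sum_univ_two, Matrix.conjTranspose_apply,
        Matrix.vecHead, Matrix.vecTail, mul_comm] <;> linarith
  refine ⟨?_, ?_, ?_, ?_, ?_⟩
  · rw [hρ]; exact Matrix.posSemidef_self_mul_conjTranspose _
  · simp [ρ, Matrix.trace, Matrix.diag, Fin.sum_univ_four, Matrix.vecHead, Matrix.vecTail]; ring
  · rw [hρ]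
    exact (Matrix.rank_mul_le_left _ _).trans (Matrix.rank_le_width _)
  · have : (ρ * ρ).trace = (1-u)^2 + ((u+d)/2)^2 + ((u-d)/2)^2 + c^2/2 := by
      simp [ρ, Matrix.trace, Matrix.diag, Matrix.mul_apply, Fin.sum_univ_four, Matrix.vecHead, Matrix.vecTail]
      ring
    rw [this]
    linear_combination hd2/2 + hs2/2 + (2*u + s - 1)*hu
  · have h12 : ρ 1 2 = c/2 := by simp [ρ]
    have h00 : ρ 0 0 = 1-u := by simp [ρ]
    have h33 : ρ 3 3 = 0 := by simp [ρ, Matrix.vecHead, Matrix.vecTail]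
    have h03 : ρ 0 3 = 0 := by simp [ρ]
    have h11 : ρ 1 1 = (u+d)/2 := by simp [ρ]
    have h22 : ρ 2 2 = (u-d)/2 := by simp [ρ]
    rw [h12, h00, h33, h03, h11, h22, mul_zero, Real.sqrt_zero, abs_zero,
      abs_of_nonneg (by linarith : (0:ℝ) ≤ c/2)]
    have : Real.sqrt ((u+d)/2 * ((u-d)/2)) = c/2 := by
      have h : (u+d)/2 * ((u-d)/2) = (c/2)^2 := by nlinarith
      rw [h, Real.sqrt_sq (by linarith)]
    rw [this]
    rw [max_eq_left (by linarith : 0 - c/2 ≤ c/2 - 0), max_eq_right (by linarith)]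
    ring
end

section
/- For p ∈ [1/3, 5/9[, c ∈ [0, v] with v = √(2p − 2/3) and w = 1/3 − (1/2)√(v²/3 − c²/3), the 4×4 matrix ρ₃ with nonzero entries ρ₁₁ = 1 − 2w, ρ₂₂ = w, ρ₄₄ = w, ρ₁₄ = ρ₄₁ = c/2 is a positive semidefinite density matrix of rank 3 with purity p and concurrence c. -/
open Real Matrix

set_option maxHeartbeats 1000000 in
theorem stmt12 (p c v w : ℝ)
    (hp : p ∈ Set.Ico (1/3 : ℝ) (5/9))
    (hv : v = Real.sqrt (2*p - 2/3))
    (hc : c ∈ Set.Icc 0 v)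
    (hw : w = 1/3 - (1/2) * Real.sqrt (v^2/3 - c^2/3)) :
    letI ρ : Matrix (Fin 4) (Fin 4) ℝ :=
      !![1 - 2*w, 0, 0, c / 2;
         0, w, 0, 0;
         0, 0, 0, 0;
         c / 2, 0, 0, w]
    ρ.PosSemidef ∧ ρ.trace = 1 ∧ ρ.rank = 3 ∧ (ρ * ρ).trace = p ∧
      2 * max 0 (max (|ρ 1 2| - Real.sqrt (ρ 0 0 * ρ 3 3))
                     (|ρ 0 3| - Real.sqrt (ρ 1 1 * ρ 2 2))) = c := by
  obtain ⟨hp1, hp2⟩ := hp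
  obtain ⟨hc0, hcv⟩ := hc
  have hv0 : 0 ≤ v := hv ▸ Real.sqrt_nonneg _
  have hv2 : v ^ 2 = 2*p - 2/3 := by
    rw [hv, Real.sq_sqrt (by linarith)]
  have hc2 : c ^ 2 ≤ v ^ 2 := by nlinarith
  set s : ℝ := Real.sqrt (v^2/3 - c^2/3) with hs
  have hs0 : 0 ≤ s := Real.sqrt_nonneg _
  have hs2 : s ^ 2 = v^2/3 - c^2/3 := Real.sq_sqrt (by nlinarith)
  have hwv : w = 1/3 - s/2 := by rw [hw]; ring
  have hwpos : 0 < w := by nlinarith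
  have hapos : 0 < 1 - 2*w := by nlinarith
  have hdet : 0 < (1 - 2*w) * w - c^2/4 := by nlinarith
  set ρ : Matrix (Fin 4) (Fin 4) ℝ :=
    !![1 - 2*w, 0, 0, c / 2;
       0, w, 0, 0;
       0, 0, 0, 0;
       c / 2, 0, 0, w] with hρ
  refine ⟨Matrix.PosSemidef.of_dotProduct_mulVec_nonneg ?_ ?_, ?_, ?_, ?_, ?_⟩
  · -- Hermitian
    ext i j
    fin_cases i <;> fin_cases j <;>
      simp [ρ, Matrix.conjTranspose_apply, Matrix.vecHead, Matrix.vecTail]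
  · -- positivity of quadratic form
    intro x
    have hq : star x ⬝ᵥ ρ.mulVec x =
        (1 - 2*w) * (x 0)^2 + w * (x 1)^2 + w * (x 3)^2 + c * (x 0 * x 3) := by
      simp [ρ, dotProduct, Matrix.mulVec, Fin.sum_univ_four, Matrix.vecHead, Matrix.vecTail]
      ring
    rw [hq]
    nlinarith [sq_nonneg ((1 - 2*w) * x 0 + (c/2) * x 3), sq_nonneg (x 1), sq_nonneg (x 3),
      mul_pos hapos hwpos]
  · -- trace
    simp [ρ, Matrix.trace, Fin.sum_univ_four, Matrix.vecHead, Matrix.vecTail, Matrix.diag]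
    ring
  · -- rank
    have ha0 : (1 - 2*w) ≠ 0 := ne_of_gt hapos
    set E : Matrix (Fin 4) (Fin 4) ℝ :=
      !![1, 0, 0, 0;
         0, 1, 0, 0;
         0, 0, 1, 0;
         -c/(2*(1 - 2*w)), 0, 0, 1] with hE
    have hdetE : E.det = 1 := by
      simp [hE, Matrix.det_succ_row_zero, Fin.sum_univ_succ, Matrix.vecHead, Matrix.vecTail]
    have hEunit : IsUnit E.det := by rw [hdetE]; exact isUnit_one
    have hETunit : IsUnit Eᵀ.det := by rw [Matrix.det_transpose, hdetE]; exact isUnit_one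
    have hET : Eᵀ = !![1, 0, 0, -c/(2*(1 - 2*w));
         0, 1, 0, 0;
         0, 0, 1, 0;
         0, 0, 0, 1] := by
      ext i j
      fin_cases i <;> fin_cases j <;>
        simp [hE, Matrix.vecHead, Matrix.vecTail]
    have hD : E * ρ * Eᵀ =
        Matrix.diagonal ![1 - 2*w, w, 0, w - c^2/(4*(1 - 2*w))] := by
      rw [hET]
      ext i j
      fin_cases i <;> fin_cases j <;>
        · simp [hE, hρ, Matrix.mul_apply, Fin.sum_univ_four, Matrix.diagonal,
            Matrix.vecHead, Matrix.vecTail]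
          try field_simp
          try ring
    have hrk : (E * ρ * Eᵀ).rank = ρ.rank := by
      rw [Matrix.rank_mul_eq_left_of_isUnit_det _ _ hETunit,
        Matrix.rank_mul_eq_right_of_isUnit_det _ _ hEunit]
    rw [← hrk, hD, Matrix.rank_diagonal]
    have hd3 : w - c^2/(4*(1 - 2*w)) ≠ 0 := by
      have : 0 < w - c^2/(4*(1 - 2*w)) := by
        rw [sub_pos, div_lt_iff₀ (by linarith)]
        nlinarith
      exact ne_of_gt this
    rw [Fintype.card_subtype]
    have : (Finset.univ.filter fun i : Fin 4 =>
        ![1 - 2*w, w, 0, w - c^2/(4*(1 - 2*w))] i ≠ 0) = {0, 1, 3} := by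
      ext i
      fin_cases i <;>
        simp [ha0, hwpos.ne', hd3]
    rw [this]
    decide
  · -- purity
    have : (ρ * ρ).trace =
        (1 - 2*w)^2 + 2*w^2 + c^2/2 := by
      simp [ρ, Matrix.trace, Matrix.mul_apply, Fin.sum_univ_four, Matrix.diag,
        Matrix.vecHead, Matrix.vecTail]
      ring
    rw [this, hwv]
    nlinarith
  · -- concurrence
    have h12 : ρ 1 2 = 0 := by simp [ρ, Matrix.vecHead, Matrix.vecTail]
    have h03 : ρ 0 3 = c / 2 := by simp [ρ, Matrix.vecHead, Matrix.vecTail]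
    have h00 : ρ 0 0 = 1 - 2*w := by simp [ρ, Matrix.vecHead, Matrix.vecTail]
    have h33 : ρ 3 3 = w := by simp [ρ, Matrix.vecHead, Matrix.vecTail]
    have h11 : ρ 1 1 = w := by simp [ρ, Matrix.vecHead, Matrix.vecTail]
    have h22 : ρ 2 2 = 0 := by simp [ρ, Matrix.vecHead, Matrix.vecTail]
    rw [h12, h03, h00, h33, h11, h22]
    have hs1 : Real.sqrt (w * 0) = 0 := by simp
    rw [hs1, abs_zero, sub_zero]
    have habs : |c / 2| = c / 2 := abs_of_nonneg (by linarith)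
    rw [habs]
    have h1 : 0 - Real.sqrt ((1 - 2*w) * w) ≤ c / 2 := by
      have := Real.sqrt_nonneg ((1 - 2*w) * w)
      linarith
    rw [max_eq_right h1, max_eq_right (by linarith : (0:ℝ) ≤ c / 2)]
    ring
end

section
/- Conjugation of a two-qubit X-density matrix by the block-diagonal-in-X-form unitary V (two independent SU(2) rotations acting on Span{|00⟩,|11⟩} and Span{|01⟩,|10⟩}) preserves the X-form, and, with b₂ = μ and b₄ = ν, the anti-diagonal magnitudes transform as x' = ((h/2)sin 2b₁ − √x cos 2b₁)² and y' = ((g/2)sin 2b₃ − √y cos 2b₃)², where h = cos²θ − sin²θ sin²φ sin²ψ and g = sin²θ(cos²φ − sin²φ cos²ψ). -/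
open Real Complex Matrix Polynomial
open scoped ComplexOrder

/-- The X-form unitary: two independent SU(2) blocks on Span{|00⟩,|11⟩} and
Span{|01⟩,|10⟩}. -/
noncomputable def Vmat (b₁ b₂ b₃ b₄ : ℝ) : Matrix (Fin 4) (Fin 4) ℂ :=
  !![(Real.cos b₁ : ℂ), 0, 0, Complex.exp (Complex.I * (b₂ : ℂ)) * (Real.sin b₁ : ℂ);
     0, (Real.cos b₃ : ℂ), Complex.exp (Complex.I * (b₄ : ℂ)) * (Real.sin b₃ : ℂ), 0;
     0, -Complex.exp (-Complex.I * (b₄ : ℂ)) * (Real.sin b₃ : ℂ), (Real.cos b₃ : ℂ), 0;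
     -Complex.exp (-Complex.I * (b₂ : ℂ)) * (Real.sin b₁ : ℂ), 0, 0, (Real.cos b₁ : ℂ)]

private lemma entry03 (θ φ ψ x y μ ν b₁ b₃ : ℝ) :
    (Vmat b₁ μ b₃ ν * Xmat θ φ ψ x y μ ν * (Vmat b₁ μ b₃ ν)ᴴ) 0 3 =
      Complex.exp (Complex.I * μ) *
        ((Real.sqrt x * Real.cos (2*b₁) -
          ((Real.cos θ)^2 - (Real.sin θ)^2*(Real.sin φ)^2*(Real.sin ψ)^2)/2 * Real.sin (2*b₁) : ℝ) : ℂ) := by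
  simp only [Vmat, Xmat, Matrix.mul_apply, Fin.sum_univ_four, Matrix.conjTranspose_apply,
    Matrix.cons_val', Matrix.cons_val_zero, Matrix.cons_val_one, Matrix.head_cons,
    Matrix.empty_val', Matrix.cons_val_fin_one, Matrix.cons_val_three, Matrix.head_fin_const,
    Matrix.cons_val_two, Matrix.tail_cons, Matrix.of_apply]
  rw [Real.sin_two_mul, Real.cos_two_mul']
  simp only [star_mul', star_neg, RCLike.star_def, ← Complex.exp_conj,
    _root_.map_mul, _root_.map_neg, Complex.conj_I, Complex.conj_ofReal, neg_mul, neg_neg, mul_neg]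
  push_cast
  have he : Complex.exp (Complex.I*(μ:ℂ)) * Complex.exp (-(Complex.I*(μ:ℂ))) = 1 := by
    rw [← Complex.exp_add]; simp
  linear_combination (-(Complex.exp (Complex.I*(μ:ℂ))) * Complex.sin (b₁:ℂ) ^ 2 * ((Real.sqrt x : ℝ):ℂ)) * he

private lemma entry12 (θ φ ψ x y μ ν b₁ b₃ : ℝ) :
    (Vmat b₁ μ b₃ ν * Xmat θ φ ψ x y μ ν * (Vmat b₁ μ b₃ ν)ᴴ) 1 2 =
      Complex.exp (Complex.I * ν) *
        ((Real.sqrt y * Real.cos (2*b₃) -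
          ((Real.sin θ)^2 * ((Real.cos φ)^2 - (Real.sin φ)^2*(Real.cos ψ)^2))/2 * Real.sin (2*b₃) : ℝ) : ℂ) := by
  simp only [Vmat, Xmat, Matrix.mul_apply, Fin.sum_univ_four, Matrix.conjTranspose_apply,
    Matrix.cons_val', Matrix.cons_val_zero, Matrix.cons_val_one, Matrix.head_cons,
    Matrix.empty_val', Matrix.cons_val_fin_one, Matrix.cons_val_three, Matrix.head_fin_const,
    Matrix.cons_val_two, Matrix.tail_cons, Matrix.of_apply]
  rw [Real.sin_two_mul, Real.cos_two_mul']
  simp only [star_mul', star_neg, RCLike.star_def, ← Complex.exp_conj,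
    _root_.map_mul, _root_.map_neg, Complex.conj_I, Complex.conj_ofReal, neg_mul, neg_neg, mul_neg]
  push_cast
  have he : Complex.exp (Complex.I*(ν:ℂ)) * Complex.exp (-(Complex.I*(ν:ℂ))) = 1 := by
    rw [← Complex.exp_add]; simp
  linear_combination (-(Complex.exp (Complex.I*(ν:ℂ))) * Complex.sin (b₃:ℂ) ^ 2 * ((Real.sqrt y : ℝ):ℂ)) * he

private lemma absq (t : ℝ) (z : ℂ) (r : ℝ)
    (hz : z = Complex.exp (Complex.I * t) * (r : ℂ)) :
    ‖z‖^2 = r^2 := by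
  rw [hz, norm_mul, Complex.norm_exp, Complex.norm_real]
  simp [_root_.sq_abs]

theorem stmt13 (θ φ ψ x y μ ν b₁ b₃ : ℝ)
    (hθ : θ ∈ Set.Icc 0 (Real.pi / 2)) (hφ : φ ∈ Set.Icc 0 (Real.pi / 2))
    (hψ : ψ ∈ Set.Icc 0 (Real.pi / 2)) (hx : 0 ≤ x) (hy : 0 ≤ y)
    (h g : ℝ)
    (hh : h = (Real.cos θ)^2 - (Real.sin θ)^2 * (Real.sin φ)^2 * (Real.sin ψ)^2)
    (hg : g = (Real.sin θ)^2 * ((Real.cos φ)^2 - (Real.sin φ)^2 * (Real.cos ψ)^2)) :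
    letI ρ' := Vmat b₁ μ b₃ ν * Xmat θ φ ψ x y μ ν * (Vmat b₁ μ b₃ ν)ᴴ
    (ρ' 0 1 = 0 ∧ ρ' 0 2 = 0 ∧ ρ' 1 0 = 0 ∧ ρ' 1 3 = 0 ∧
     ρ' 2 0 = 0 ∧ ρ' 2 3 = 0 ∧ ρ' 3 1 = 0 ∧ ρ' 3 2 = 0) ∧
    ‖ρ' 0 3‖^2 =
      ((h/2) * Real.sin (2*b₁) - Real.sqrt x * Real.cos (2*b₁))^2 ∧
    ‖ρ' 1 2‖^2 =
      ((g/2) * Real.sin (2*b₃) - Real.sqrt y * Real.cos (2*b₃))^2 := by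
  refine ⟨⟨?_, ?_, ?_, ?_, ?_, ?_, ?_, ?_⟩, ?_, ?_⟩
  · simp [Vmat, Xmat, Matrix.mul_apply, Fin.sum_univ_four, Matrix.conjTranspose_apply]
  · simp [Vmat, Xmat, Matrix.mul_apply, Fin.sum_univ_four, Matrix.conjTranspose_apply]
  · simp [Vmat, Xmat, Matrix.mul_apply, Fin.sum_univ_four, Matrix.conjTranspose_apply]
  · simp [Vmat, Xmat, Matrix.mul_apply, Fin.sum_univ_four, Matrix.conjTranspose_apply]
  · simp [Vmat, Xmat, Matrix.mul_apply, Fin.sum_univ_four, Matrix.conjTranspose_apply]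
  · simp [Vmat, Xmat, Matrix.mul_apply, Fin.sum_univ_four, Matrix.conjTranspose_apply]
  · simp [Vmat, Xmat, Matrix.mul_apply, Fin.sum_univ_four, Matrix.conjTranspose_apply]
  · simp [Vmat, Xmat, Matrix.mul_apply, Fin.sum_univ_four, Matrix.conjTranspose_apply]
  · rw [absq μ _ _ (entry03 θ φ ψ x y μ ν b₁ b₃), hh]; ring
  · rw [absq ν _ _ (entry12 θ φ ψ x y μ ν b₁ b₃), hg]; ring
end

section
/- Let x > G ≥ 0, h ∈ ℝ, X₊ := (h/2)² + x > 0, X₋ := (h/2)² − x. Then z₋ := (xX₊ + GX₋ − |h|√(xG(X₊ − G)))/X₊² satisfies 0 < z₋ < 1 whenever h ≠ 0 and x > 0, and z₊ := (xX₊ + GX₋ + |h|√(xG(X₊ − G)))/X₊² satisfies 0 < z₊ ≤ 1, with z₊ = 1 iff G = (h/2)². -/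
theorem stmt16 (x G h Xp Xm zm zp : ℝ)
    (hxG : x > G) (hG : 0 ≤ G)
    (hXp : Xp = (h/2)^2 + x) (hXm : Xm = (h/2)^2 - x)
    (hzm : zm = (x * Xp + G * Xm - |h| * Real.sqrt (x * G * (Xp - G))) / Xp^2)
    (hzp : zp = (x * Xp + G * Xm + |h| * Real.sqrt (x * G * (Xp - G))) / Xp^2)
    (hh : h ≠ 0) (hx : 0 < x) :
    (0 < zm ∧ zm < 1) ∧ (0 < zp ∧ zp ≤ 1) ∧ (zp = 1 ↔ G = (h/2)^2) := by
  subst hzm hzp hXp hXm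
  set t := (h/2)^2 with ht
  have ht0 : 0 < t := by positivity
  have hxG' : 0 < x - G := sub_pos.mpr hxG
  have hXpG : (0:ℝ) < (t + x) - G := by nlinarith
  have hXp0 : (0:ℝ) < t + x := by nlinarith
  have hXp2 : (0:ℝ) < (t + x)^2 := by positivity
  set s := Real.sqrt (x * G * ((t + x) - G)) with hs
  have hs0 : 0 ≤ s := Real.sqrt_nonneg _
  have hs2 : s^2 = x * G * ((t + x) - G) := Real.sq_sqrt (by positivity)
  have habs : |h|^2 = h^2 := sq_abs h
  have hu0 : 0 ≤ |h| * s := mul_nonneg (abs_nonneg h) hs0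
  have hprod : (|h| * s)^2 = 4 * t * (x * G * ((t + x) - G)) := by
    rw [mul_pow, habs, hs2]; ring
  have hA : 0 < x * (t + x) + G * (t - x) := by nlinarith
  -- AM-GM : |h| s ≤ t (Xp - G) + G x
  have key : |h| * s ≤ t * ((t + x) - G) + G * x := by
    have hR : 0 ≤ t * ((t + x) - G) + G * x := by positivity
    nlinarith [sq_nonneg (t * ((t + x) - G) - G * x), hprod, hu0, hR]
  have hid : (x * (t + x) + G * (t - x))^2 - (|h| * s)^2 = (x - G)^2 * (t + x)^2 := by
    rw [hprod]; ring
  have hpos : 0 < (x - G)^2 * (t + x)^2 := by positivity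
  have hlt : |h| * s < x * (t + x) + G * (t - x) := by
    nlinarith [hid, hpos, hA, hu0]
  refine ⟨⟨?_, ?_⟩, ⟨?_, ?_⟩, ?_, ?_⟩
  · exact div_pos (by linarith) hXp2
  · rw [div_lt_one hXp2]
    nlinarith [mul_pos ht0 hXpG, mul_nonneg hG hx.le, hu0]
  · exact div_pos (by linarith) hXp2
  · rw [div_le_one hXp2]
    nlinarith [key]
  · -- zp = 1 → G = t
    intro h1
    rw [div_eq_one_iff_eq (ne_of_gt hXp2)] at h1
    have heq : |h| * s = t * ((t + x) - G) + G * x := by linear_combination h1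
    have e : ((t - G) * (t + x))^2 = 0 := by
      linear_combination (-(t * ((t + x) - G) + G * x + |h| * s)) * heq - hprod + 2 * s^2 * habs + 2 * h^2 * hs2
    have e2 : (t - G) * (t + x) = 0 := by
      exact pow_eq_zero_iff (n := 2) (by norm_num) |>.mp e
    rcases mul_eq_zero.mp e2 with h2 | h2
    · linarith [sub_eq_zero.mp h2]
    · linarith
  · -- G = t → zp = 1
    intro h1
    have hxeq : x * G * ((t + x) - G) = (x * |h| / 2)^2 := by
      rw [h1, ht]
      linear_combination (-(x^2)/4) * sq_abs h
    have hsv : s = x * |h| / 2 := by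
      rw [hs, hxeq, Real.sqrt_sq (by positivity)]
    rw [hsv, div_eq_one_iff_eq (ne_of_gt hXp2)]
    linear_combination (t - x) * h1 + (x/2) * sq_abs h - 2*x*ht
end

section
/- Let x > G ≥ 0 and h ∈ ℝ with h ≠ 0, and z₋ as above. Then there exists b₁ ∈ [0, π/2] such that ((h/2)·sin 2b₁ − √x·cos 2b₁)² = G; explicitly, cos b₁ = √(1/2 + (s̃/2)√(1 − z₋)) and sin b₁ = √(1/2 − (s̃/2)√(1 − z₋)) with s̃ = sgn(h)·sgn(z₋X₋ + x − G). -/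
set_option maxHeartbeats 1000000

theorem stmt17 (x G h Xp Xm zm : ℝ)
    (hxG : x > G) (hG : 0 ≤ G) (hh : h ≠ 0)
    (hXp : Xp = (h/2)^2 + x) (hXm : Xm = (h/2)^2 - x)
    (hzm : zm = (x * Xp + G * Xm - |h| * Real.sqrt (x * G * (Xp - G))) / Xp^2)
    (s : ℝ) (hs : s = Real.sign h * Real.sign (zm * Xm + x - G)) :
    ∃ b₁ ∈ Set.Icc 0 (Real.pi / 2),
      Real.cos b₁ = Real.sqrt (1/2 + (s/2) * Real.sqrt (1 - zm)) ∧
      Real.sin b₁ = Real.sqrt (1/2 - (s/2) * Real.sqrt (1 - zm)) ∧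
      ((h/2) * Real.sin (2*b₁) - Real.sqrt x * Real.cos (2*b₁))^2 = G := by
  subst hXp hXm
  have hx : 0 < x := lt_of_le_of_lt hG hxG
  have hq : 0 < (h/2)^2 := by positivity
  have hXpos : 0 < (h/2)^2 + x := by linarith
  have hXpG : (0:ℝ) < (h/2)^2 + x - G := by linarith
  set B := Real.sqrt (x * G * ((h/2)^2 + x - G)) with hBdef
  have hB0 : 0 ≤ B := Real.sqrt_nonneg _
  have hBsq : (|h| * B)^2 = h^2 * (x * G * ((h/2)^2 + x - G)) := by
    rw [mul_pow, sq_abs, Real.sq_sqrt (by positivity)]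
  -- zm * Xp^2 = A - |h|B
  have hz1 : zm * ((h/2)^2 + x)^2 =
      x * ((h/2)^2 + x) + G * ((h/2)^2 - x) - |h| * B := by
    rw [hzm]; field_simp
  -- quadratic relation
  have hsq : (zm * ((h/2)^2 + x)^2 - (x * ((h/2)^2 + x) + G * ((h/2)^2 - x)))^2
      = h^2 * (x * G * ((h/2)^2 + x - G)) := by
    rw [show zm * ((h/2)^2 + x)^2 - (x * ((h/2)^2 + x) + G * ((h/2)^2 - x)) = -(|h| * B)
      by linarith, neg_pow, ← hBsq]; ring
  have hQmul : ((h/2)^2 + x)^2 *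
      (((h/2)^2 + x)^2 * zm^2 - 2*(x * ((h/2)^2 + x) + G * ((h/2)^2 - x)) * zm + (x-G)^2) = 0 := by
    linear_combination hsq
  have hQ : ((h/2)^2 + x)^2 * zm^2 - 2*(x * ((h/2)^2 + x) + G * ((h/2)^2 - x)) * zm + (x-G)^2 = 0 := by
    have h2 : ((h/2)^2 + x)^2 ≠ 0 := by positivity
    exact (mul_eq_zero.1 hQmul).resolve_left h2
  -- bounds on zm
  have hApos : 0 < x * ((h/2)^2 + x) + G * ((h/2)^2 - x) := by nlinarith
  have hB2ltA2 : (|h| * B)^2 < (x * ((h/2)^2 + x) + G * ((h/2)^2 - x))^2 := by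
    rw [hBsq]; nlinarith [mul_pos (pow_pos (sub_pos.2 hxG) 2) (pow_pos hXpos 2)]
  have hBltA : |h| * B < x * ((h/2)^2 + x) + G * ((h/2)^2 - x) :=
    lt_of_pow_lt_pow_left₀ 2 hApos.le hB2ltA2
  have hzmpos : 0 < zm := by
    rw [hzm]; apply div_pos (by linarith) (by positivity)
  have hzm1 : zm < 1 := by
    rw [hzm, div_lt_one (by positivity)]
    nlinarith [mul_nonneg (abs_nonneg h) hB0]
  -- key identity for D
  have hD : (zm * ((h/2)^2 - x) + x - G)^2 = h^2 * x * (zm * (1 - zm)) := by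
    linear_combination hQ
  have hDpos : 0 < h^2 * x * (zm * (1 - zm)) :=
    mul_pos (mul_pos (by positivity) hx) (mul_pos hzmpos (by linarith))
  have hDne : zm * ((h/2)^2 - x) + x - G ≠ 0 := by
    intro h0; rw [h0] at hD; nlinarith
  set D := zm * ((h/2)^2 - x) + x - G with hDdef
  clear_value B
  clear hz1 hsq hQmul hQ hBsq hB0 hBdef hBltA hB2ltA2 hApos hzm hDpos B
  -- sign facts
  have hsD : Real.sign D * |D| = D := by
    rcases hDne.lt_or_gt with h2 | h2
    · rw [Real.sign_of_neg h2, abs_of_neg h2]; ring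
    · rw [Real.sign_of_pos h2, abs_of_pos h2]; ring
  have hs1 : s = 1 ∨ s = -1 := by
    rcases hh.lt_or_gt with h1 | h1 <;> rcases hDne.lt_or_gt with h2 | h2 <;>
      simp [hs, Real.sign_of_neg, Real.sign_of_pos, h1, h2]
  have hhs : h * s = |h| * Real.sign D := by
    rw [hs]
    rcases hh.lt_or_gt with h1 | h1
    · rw [Real.sign_of_neg h1, abs_of_neg h1]; ring
    · rw [Real.sign_of_pos h1, abs_of_pos h1]; ring
  -- t = sqrt(1 - zm)
  set t := Real.sqrt (1 - zm) with htdef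
  have ht0 : 0 ≤ t := Real.sqrt_nonneg _
  have htsq : t^2 = 1 - zm := Real.sq_sqrt (by linarith)
  have ht1 : t < 1 := by nlinarith
  have hssq : s^2 = 1 := by rcases hs1 with h1 | h1 <;> rw [h1] <;> ring
  -- e = 1/2 + (s/2) t
  have he0 : 0 ≤ 1/2 + (s/2) * t := by rcases hs1 with h1 | h1 <;> rw [h1] <;> nlinarith
  have he1 : 1/2 + (s/2) * t ≤ 1 := by rcases hs1 with h1 | h1 <;> rw [h1] <;> nlinarith
  set c := Real.sqrt (1/2 + (s/2) * t) with hcdef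
  have hc0 : 0 ≤ c := Real.sqrt_nonneg _
  have hc1 : c ≤ 1 := Real.sqrt_le_one.2 he1
  have hcsq : c^2 = 1/2 + (s/2) * t := Real.sq_sqrt he0
  refine ⟨Real.arccos c, ⟨Real.arccos_nonneg c, Real.arccos_le_pi_div_two.2 hc0⟩, ?_, ?_, ?_⟩
  · rw [Real.cos_arccos (by linarith) hc1]
  · rw [Real.sin_arccos, hcsq]
    congr 1; ring
  · have hcos2 : Real.cos (2 * Real.arccos c) = s * t := by
      rw [Real.cos_two_mul, Real.cos_arccos (by linarith) hc1, hcsq]; ring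
    have hsin2 : Real.sin (2 * Real.arccos c) = Real.sqrt zm := by
      rw [Real.sin_two_mul, Real.sin_arccos, Real.cos_arccos (by linarith) hc1, hcsq]
      have h1 : Real.sqrt (1 - (1/2 + s/2 * t)) * c
          = Real.sqrt ((1 - (1/2 + s/2 * t)) * (1/2 + s/2 * t)) := by
        rw [hcdef, ← Real.sqrt_mul (by linarith)]
      rw [mul_assoc, h1,
        show (1 - (1/2 + s/2 * t)) * (1/2 + s/2 * t) = zm * (1/2)^2 by
          linear_combination (-(t^2)/4) * hssq - (1/4) * htsq,
        Real.sqrt_mul hzmpos.le, Real.sqrt_sq (by norm_num : (0:ℝ) ≤ 1/2)]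
      ring
    rw [hcos2, hsin2]
    have hkey : h * s * (Real.sqrt x * (Real.sqrt zm * t)) = D := by
      rw [hhs, htdef, ← Real.sqrt_mul hzmpos.le, ← Real.sqrt_mul hx.le]
      have : |h| * Real.sqrt (x * (zm * (1 - zm))) = |D| := by
        rw [← Real.sqrt_sq_eq_abs h, ← Real.sqrt_mul (sq_nonneg h), ← Real.sqrt_sq_eq_abs D, hD]
        congr 1; ring
      rw [mul_comm (|h|) (Real.sign D), mul_assoc, this, hsD]
    have hxx : Real.sqrt x ^ 2 = x := Real.sq_sqrt hx.le
    have hzz : Real.sqrt zm ^ 2 = zm := Real.sq_sqrt hzmpos.le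
    have expand : ((h/2) * Real.sqrt zm - Real.sqrt x * (s * t))^2 =
        (h/2)^2 * zm + x * s^2 * t^2 - h * s * (Real.sqrt x * (Real.sqrt zm * t)) := by
      linear_combination (h/2)^2 * hzz + (s*t)^2 * hxx
    rw [expand, hkey, hssq, htsq, hDdef]; ring
end
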